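/- arXiv:2409.01772 — 4 statements merged into one kernel-verified Lean document; each statement's English description precedes it below -/
import Mathlib

section
/- Let X be a metric space, E ⊆ X a non-empty subset, f : E → ℝ a Lipschitz function, and ε > 0. Then there exists a Lipschitz extension f̄ : X → ℝ of f such that Lip(f̄) ≤ Lip(f) + ε and the asymptotic slope of f̄ at every point x ∈ E equals the asymptotic slope of f (computed in E) at x, i.e. lip_a(f̄)(x) = lip_a(f)(x) for every x ∈ E. -/
open Metric Set Filter ENNReal MeasureTheory

/-- `lipOn f E` is the Lipschitz constant (valued in `ℝ≥0∞`) of `f : X → ℝ` restricted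
to the set `E ⊆ X`, namely `Lip(f; E)`. -/
noncomputable def lipOn {X : Type*} [MetricSpace X] (f : X → ℝ) (E : Set X) : ℝ≥0∞ :=
  ⨆ (x : E) (y : E), edist (f x) (f y) / edist (x : X) (y : X)

/-- `asympSlope f x` is the asymptotic slope `lip_a(f)(x) = inf_{r>0} Lip(f; B_r(x))`. -/
noncomputable def asympSlope {X : Type*} [MetricSpace X] (f : X → ℝ) (x : X) : ℝ≥0∞ :=
  ⨅ (r : ℝ) (_ : 0 < r), lipOn f (Metric.ball x r)

/-- `asympSlopeOn f E x` is the asymptotic slope of `f` at `x ∈ E` computed within `E`,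
i.e. `inf_{r>0} Lip(f; B_r(x) ∩ E)`. -/
noncomputable def asympSlopeOn {X : Type*} [MetricSpace X] (f : X → ℝ) (E : Set X) (x : X) :
    ℝ≥0∞ :=
  ⨅ (r : ℝ) (_ : 0 < r), lipOn f (Metric.ball x r ∩ E)

namespace DMGP


variable {X : Type*} [MetricSpace X]

theorem lipOn_le' {f : X → ℝ} {A : Set X} {C : ℝ≥0∞}
    (h : ∀ x ∈ A, ∀ y ∈ A, edist (f x) (f y) ≤ C * edist x y) : lipOn f A ≤ C :=
  iSup_le fun x => iSup_le fun y => ENNReal.div_le_of_le_mul (h x x.2 y y.2)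

theorem lipOn_le_ofReal {f : X → ℝ} {A : Set X} {C : ℝ} (hC : 0 ≤ C)
    (h : ∀ x ∈ A, ∀ y ∈ A, dist (f x) (f y) ≤ C * dist x y) :
    lipOn f A ≤ ENNReal.ofReal C := by
  refine lipOn_le' fun x hx y hy => ?_
  rw [edist_dist, edist_dist, ← ENNReal.ofReal_mul hC]
  exact ENNReal.ofReal_le_ofReal (h x hx y hy)

theorem edist_le_lipOn {f : X → ℝ} {A : Set X} {x y : X} (hx : x ∈ A) (hy : y ∈ A) :
    edist (f x) (f y) ≤ lipOn f A * edist x y := by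
  rcases eq_or_ne x y with rfl | hxy
  · simp
  · have h1 : edist (f x) (f y) / edist x y ≤ lipOn f A := by
      refine le_trans ?_
        (le_iSup (fun a : A => ⨆ b : A, edist (f a) (f b) / edist (a : X) b) ⟨x, hx⟩)
      exact le_iSup (fun b : A => edist (f x) (f b) / edist x (b : X)) ⟨y, hy⟩
    have h0 : edist x y ≠ 0 := by simpa using hxy
    calc edist (f x) (f y) = edist (f x) (f y) / edist x y * edist x y :=
          (ENNReal.div_mul_cancel h0 (edist_ne_top x y)).symm
    _ ≤ lipOn f A * edist x y := mul_le_mul_left h1 _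

theorem dist_le_lipOn {f : X → ℝ} {A : Set X} {x y : X} (hx : x ∈ A) (hy : y ∈ A)
    (hfin : lipOn f A ≠ ⊤) : dist (f x) (f y) ≤ (lipOn f A).toReal * dist x y := by
  have h := edist_le_lipOn (f := f) hx hy
  have h2 : (edist (f x) (f y)).toReal ≤ (lipOn f A * edist x y).toReal :=
    ENNReal.toReal_mono (ENNReal.mul_ne_top hfin (edist_ne_top x y)) h
  rwa [ENNReal.toReal_mul, ← dist_edist, ← dist_edist] at h2

theorem lipOn_mono_eqOn {f g : X → ℝ} {A B : Set X} (hAB : A ⊆ B)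
    (hfg : ∀ a ∈ A, f a = g a) : lipOn f A ≤ lipOn g B := by
  refine iSup_le fun x => iSup_le fun y => ?_
  rw [hfg x x.2, hfg y y.2]
  refine le_trans ?_
    (le_iSup (fun a : B => ⨆ b : B, edist (g a) (g b) / edist (a : X) b) ⟨x, hAB x.2⟩)
  exact le_iSup (fun b : B => edist (g (x : X)) (g b) / edist (x : X) (b : X)) ⟨y, hAB y.2⟩



variable {X : Type*} [MetricSpace X]

noncomputable def mu (L ε : ℝ) : ℝ := min 1 ε / (8 * (L + 1))

noncomputable def cc (L ε s : ℝ) : ℝ := mu L ε * min 1 (Real.sqrt s)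

noncomputable def Lam (E : Set X) (f : X → ℝ) (y : X) (u : ℝ) : ℝ :=
  sSup ((fun x => f x - f y) '' (E ∩ closedBall y u))

noncomputable def Pen (E : Set X) (f : X → ℝ) (L ε : ℝ) (y : X) (s : ℝ) : ℝ :=
  Lam E f y s + cc L ε s * s

noncomputable def qq (E : Set X) (f : X → ℝ) (L ε : ℝ) (y : X) (s : ℝ) : ℝ :=
  Pen E f L ε y s / s + cc L ε s

noncomputable def trm (E : Set X) (f : X → ℝ) (L ε : ℝ) (y : X) (t s : ℝ) : ℝ :=
  Pen E f L ε y s - qq E f L ε y s * (s - t)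

noncomputable def sig (E : Set X) (f : X → ℝ) (L ε : ℝ) (y : X) (t : ℝ) : ℝ :=
  sSup (trm E f L ε y t '' Ici t)

noncomputable def gext (E : Set X) (f : X → ℝ) (L ε : ℝ) (z : X) : ℝ :=
  ⨅ y : E, (f y + sig E f L ε y (dist z y))

section Basic

variable {E : Set X} {f : X → ℝ} {L ε : ℝ}

theorem mu_pos (hL : 0 ≤ L) (he : 0 < ε) : 0 < mu L ε :=
  div_pos (lt_min one_pos he) (by linarith)

theorem mu_le_one (hL : 0 ≤ L) (he : 0 < ε) : mu L ε ≤ 1 := by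
  rw [mu, div_le_one (by linarith)]
  have h1 : min 1 ε ≤ 1 := min_le_left _ _
  linarith

theorem eight_mu_le (hL : 0 ≤ L) (he : 0 < ε) : 8 * mu L ε ≤ ε := by
  have key : mu L ε ≤ ε / 8 := by
    rw [mu]
    exact div_le_div₀ he.le (min_le_right _ _) (by norm_num) (by linarith)
  linarith

theorem cc_nonneg (hL : 0 ≤ L) (he : 0 < ε) (s : ℝ) : 0 ≤ cc L ε s :=
  mul_nonneg (mu_pos hL he).le (le_min zero_le_one (Real.sqrt_nonneg s))

theorem cc_le_mu (hL : 0 ≤ L) (he : 0 < ε) (s : ℝ) : cc L ε s ≤ mu L ε := by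
  have := mul_le_of_le_one_right (mu_pos hL he).le (min_le_left 1 (Real.sqrt s))
  simpa [cc] using this

theorem cc_mono (hL : 0 ≤ L) (he : 0 < ε) {s t : ℝ} (h : s ≤ t) : cc L ε s ≤ cc L ε t :=
  mul_le_mul_of_nonneg_left (min_le_min le_rfl (Real.sqrt_le_sqrt h)) (mu_pos hL he).le

theorem cc_zero : cc L ε 0 = 0 := by
  simp [cc]

theorem cc_mul_mono (hL : 0 ≤ L) (he : 0 < ε) {s t : ℝ} (hs : 0 ≤ s) (h : s ≤ t) :
    cc L ε s * s ≤ cc L ε t * t :=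
  mul_le_mul (cc_mono hL he h) h hs (cc_nonneg hL he t)

theorem Lam_nonempty {y : X} (hy : y ∈ E) {u : ℝ} (hu : 0 ≤ u) :
    ((fun x => f x - f y) '' (E ∩ closedBall y u)).Nonempty :=
  ⟨f y - f y, ⟨y, ⟨hy, mem_closedBall_self hu⟩, rfl⟩⟩

theorem Lam_bddAbove (hL : 0 ≤ L)
    (hf : ∀ a ∈ E, ∀ b ∈ E, dist (f a) (f b) ≤ L * dist a b)
    {y : X} (hy : y ∈ E) {u : ℝ} (hu : 0 ≤ u) :
    BddAbove ((fun x => f x - f y) '' (E ∩ closedBall y u)) := by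
  refine ⟨L * u, ?_⟩
  rintro v ⟨x, hx, rfl⟩
  show f x - f y ≤ L * u
  have h1 := hf x hx.1 y hy
  have h2 : dist x y ≤ u := hx.2
  have h3 : f x - f y ≤ dist (f x) (f y) := by rw [Real.dist_eq]; exact le_abs_self _
  have h4 : L * dist x y ≤ L * u := mul_le_mul_of_nonneg_left h2 hL
  linarith

theorem Lam_le (hL : 0 ≤ L)
    (hf : ∀ a ∈ E, ∀ b ∈ E, dist (f a) (f b) ≤ L * dist a b)
    {y : X} (hy : y ∈ E) {u : ℝ} (hu : 0 ≤ u) : Lam E f y u ≤ L * u := by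
  refine csSup_le (Lam_nonempty hy hu) ?_
  rintro v ⟨x, hx, rfl⟩
  show f x - f y ≤ L * u
  have h1 := hf x hx.1 y hy
  have h2 : dist x y ≤ u := hx.2
  have h3 : f x - f y ≤ dist (f x) (f y) := by rw [Real.dist_eq]; exact le_abs_self _
  have h4 : L * dist x y ≤ L * u := mul_le_mul_of_nonneg_left h2 hL
  linarith

theorem Lam_nonneg (hL : 0 ≤ L)
    (hf : ∀ a ∈ E, ∀ b ∈ E, dist (f a) (f b) ≤ L * dist a b)
    {y : X} (hy : y ∈ E) {u : ℝ} (hu : 0 ≤ u) : 0 ≤ Lam E f y u := by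
  have := le_csSup (Lam_bddAbove hL hf hy hu) ⟨y, ⟨hy, mem_closedBall_self hu⟩, rfl⟩
  simpa [Lam] using this

theorem Lam_ge (hL : 0 ≤ L)
    (hf : ∀ a ∈ E, ∀ b ∈ E, dist (f a) (f b) ≤ L * dist a b)
    {y : X} (hy : y ∈ E) {u : ℝ} {x : X} (hx : x ∈ E) (hd : dist x y ≤ u) :
    f x - f y ≤ Lam E f y u :=
  le_csSup (Lam_bddAbove hL hf hy (dist_nonneg.trans hd)) ⟨x, ⟨hx, hd⟩, rfl⟩

theorem Lam_mono (hL : 0 ≤ L)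
    (hf : ∀ a ∈ E, ∀ b ∈ E, dist (f a) (f b) ≤ L * dist a b)
    {y : X} (hy : y ∈ E) {u u' : ℝ} (hu : 0 ≤ u) (h : u ≤ u') :
    Lam E f y u ≤ Lam E f y u' :=
  csSup_le_csSup (Lam_bddAbove hL hf hy (hu.trans h)) (Lam_nonempty hy hu)
    (image_mono (inter_subset_inter_right _ (closedBall_subset_closedBall h)))

theorem Lam_le_local {y x₀ : X} {u r ℓ : ℝ}
    (hloc : ∀ a ∈ ball x₀ r ∩ E, ∀ b ∈ ball x₀ r ∩ E, dist (f a) (f b) ≤ ℓ * dist a b)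
    (hy : y ∈ E) (hyb : y ∈ ball x₀ r) (hu : 0 ≤ u) (hl : 0 ≤ ℓ)
    (hsub : E ∩ closedBall y u ⊆ ball x₀ r) : Lam E f y u ≤ ℓ * u := by
  refine csSup_le (Lam_nonempty hy hu) ?_
  rintro v ⟨x, hx, rfl⟩
  show f x - f y ≤ ℓ * u
  have h1 : dist (f x) (f y) ≤ ℓ * dist x y := hloc x ⟨hsub hx, hx.1⟩ y ⟨hyb, hy⟩
  have h2 : f x - f y ≤ dist (f x) (f y) := by rw [Real.dist_eq]; exact le_abs_self _
  have h3 : dist x y ≤ u := hx.2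
  have h4 : ℓ * dist x y ≤ ℓ * u := mul_le_mul_of_nonneg_left h3 hl
  linarith

end Basic

section Core

variable {E : Set X} {f : X → ℝ} {L ε : ℝ}

theorem Pen_nonneg (hL : 0 ≤ L) (he : 0 < ε)
    (hf : ∀ a ∈ E, ∀ b ∈ E, dist (f a) (f b) ≤ L * dist a b)
    {y : X} (hy : y ∈ E) {s : ℝ} (hs : 0 ≤ s) : 0 ≤ Pen E f L ε y s :=
  add_nonneg (Lam_nonneg hL hf hy hs) (mul_nonneg (cc_nonneg hL he s) hs)

theorem Pen_le (hL : 0 ≤ L) (he : 0 < ε)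
    (hf : ∀ a ∈ E, ∀ b ∈ E, dist (f a) (f b) ≤ L * dist a b)
    {y : X} (hy : y ∈ E) {s : ℝ} (hs : 0 ≤ s) : Pen E f L ε y s ≤ (L + mu L ε) * s := by
  have h1 := Lam_le hL hf hy hs
  have h2 : cc L ε s * s ≤ mu L ε * s := mul_le_mul_of_nonneg_right (cc_le_mu hL he s) hs
  rw [Pen]; nlinarith

theorem Pen_mono (hL : 0 ≤ L) (he : 0 < ε)
    (hf : ∀ a ∈ E, ∀ b ∈ E, dist (f a) (f b) ≤ L * dist a b)
    {y : X} (hy : y ∈ E) {s t : ℝ} (hs : 0 ≤ s) (h : s ≤ t) :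
    Pen E f L ε y s ≤ Pen E f L ε y t :=
  add_le_add (Lam_mono hL hf hy hs h) (cc_mul_mono hL he hs h)

theorem qq_nonneg (hL : 0 ≤ L) (he : 0 < ε)
    (hf : ∀ a ∈ E, ∀ b ∈ E, dist (f a) (f b) ≤ L * dist a b)
    {y : X} (hy : y ∈ E) {s : ℝ} (hs : 0 ≤ s) : 0 ≤ qq E f L ε y s :=
  add_nonneg (div_nonneg (Pen_nonneg hL he hf hy hs) hs) (cc_nonneg hL he s)

theorem qq_le (hL : 0 ≤ L) (he : 0 < ε)
    (hf : ∀ a ∈ E, ∀ b ∈ E, dist (f a) (f b) ≤ L * dist a b)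
    {y : X} (hy : y ∈ E) {s : ℝ} (hs : 0 ≤ s) : qq E f L ε y s ≤ L + 2 * mu L ε := by
  have hμ := mu_pos hL he
  rcases eq_or_lt_of_le hs with h | h
  · have hs0 : s = 0 := h.symm
    subst hs0
    have e : qq E f L ε y 0 = 0 := by
      rw [qq, cc_zero]
      simp
    rw [e]
    linarith
  · have h1 : Pen E f L ε y s / s ≤ L + mu L ε := by
      rw [div_le_iff₀ h]
      have := Pen_le hL he hf hy hs
      nlinarith
    have h2 := cc_le_mu hL he s
    rw [qq]; linarith

theorem trm_le (hL : 0 ≤ L) (he : 0 < ε)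
    (hf : ∀ a ∈ E, ∀ b ∈ E, dist (f a) (f b) ≤ L * dist a b)
    {y : X} (hy : y ∈ E) {t s : ℝ} (ht : 0 ≤ t) (hts : t ≤ s) (hs : 0 < s) :
    trm E f L ε y t s ≤ (L + 1) * t - cc L ε s * (s - t) := by
  have hP := Pen_le hL he hf hy hs.le
  have hμ1 := mu_le_one hL he
  have key : trm E f L ε y t s = Pen E f L ε y s * (t / s) - cc L ε s * (s - t) := by
    rw [trm, qq]; field_simp; ring
  rw [key]
  have h1 : Pen E f L ε y s * (t / s) ≤ (L + mu L ε) * s * (t / s) :=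
    mul_le_mul_of_nonneg_right hP (div_nonneg ht hs.le)
  have h2 : (L + mu L ε) * s * (t / s) = (L + mu L ε) * t := by field_simp
  have h3 : (L + mu L ε) * t ≤ (L + 1) * t := mul_le_mul_of_nonneg_right (by linarith) ht
  linarith

theorem trm_le' (hL : 0 ≤ L) (he : 0 < ε)
    (hf : ∀ a ∈ E, ∀ b ∈ E, dist (f a) (f b) ≤ L * dist a b)
    {y : X} (hy : y ∈ E) {t s : ℝ} (ht : 0 ≤ t) (hts : t ≤ s) :
    trm E f L ε y t s ≤ (L + 1) * t := by
  rcases eq_or_lt_of_le (ht.trans hts) with h | h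
  · have hs0 : s = 0 := h.symm
    have ht0 : t = 0 := le_antisymm (hs0 ▸ hts) ht
    subst hs0; subst ht0
    have h1 : Lam E f y 0 ≤ L * 0 := Lam_le hL hf hy le_rfl
    simp only [trm, Pen, cc_zero, sub_zero, mul_zero, add_zero, zero_sub, mul_neg, sub_neg_eq_add]
    nlinarith
  · have h4 := trm_le hL he hf hy ht hts h
    have h5 : 0 ≤ cc L ε s * (s - t) := mul_nonneg (cc_nonneg hL he s) (by linarith)
    linarith

theorem sig_bddAbove (hL : 0 ≤ L) (he : 0 < ε)
    (hf : ∀ a ∈ E, ∀ b ∈ E, dist (f a) (f b) ≤ L * dist a b)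
    {y : X} (hy : y ∈ E) {t : ℝ} (ht : 0 ≤ t) : BddAbove (trm E f L ε y t '' Ici t) := by
  refine ⟨(L + 1) * t, ?_⟩
  rintro v ⟨s, hs, rfl⟩
  exact trm_le' hL he hf hy ht hs

theorem sig_nonempty {y : X} {t : ℝ} : (trm E f L ε y t '' Ici t).Nonempty :=
  ⟨trm E f L ε y t t, t, self_mem_Ici, rfl⟩

theorem trm_self {y : X} {t : ℝ} : trm E f L ε y t t = Pen E f L ε y t := by
  rw [trm]; ring

theorem Pen_le_sig (hL : 0 ≤ L) (he : 0 < ε)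
    (hf : ∀ a ∈ E, ∀ b ∈ E, dist (f a) (f b) ≤ L * dist a b)
    {y : X} (hy : y ∈ E) {t : ℝ} (ht : 0 ≤ t) : Pen E f L ε y t ≤ sig E f L ε y t := by
  have := le_csSup (sig_bddAbove hL he hf hy ht) ⟨t, self_mem_Ici, rfl⟩
  rwa [trm_self] at this

theorem sig_le (hL : 0 ≤ L) (he : 0 < ε)
    (hf : ∀ a ∈ E, ∀ b ∈ E, dist (f a) (f b) ≤ L * dist a b)
    {y : X} (hy : y ∈ E) {t : ℝ} (ht : 0 ≤ t) : sig E f L ε y t ≤ (L + 1) * t := by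
  refine csSup_le sig_nonempty ?_
  rintro v ⟨s, hs, rfl⟩
  exact trm_le' hL he hf hy ht hs

theorem sig_nonneg (hL : 0 ≤ L) (he : 0 < ε)
    (hf : ∀ a ∈ E, ∀ b ∈ E, dist (f a) (f b) ≤ L * dist a b)
    {y : X} (hy : y ∈ E) {t : ℝ} (ht : 0 ≤ t) : 0 ≤ sig E f L ε y t :=
  (Pen_nonneg hL he hf hy ht).trans (Pen_le_sig hL he hf hy ht)

theorem sig_zero (hL : 0 ≤ L) (he : 0 < ε)
    (hf : ∀ a ∈ E, ∀ b ∈ E, dist (f a) (f b) ≤ L * dist a b)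
    {y : X} (hy : y ∈ E) : sig E f L ε y 0 = 0 := by
  have h1 := sig_le hL he hf hy (le_refl (0:ℝ))
  have h2 := sig_nonneg hL he hf hy (le_refl (0:ℝ))
  rw [mul_zero] at h1
  linarith

theorem sig_mono (hL : 0 ≤ L) (he : 0 < ε)
    (hf : ∀ a ∈ E, ∀ b ∈ E, dist (f a) (f b) ≤ L * dist a b)
    {y : X} (hy : y ∈ E) {t t' : ℝ} (ht : 0 ≤ t) (h : t ≤ t') :
    sig E f L ε y t ≤ sig E f L ε y t' := by
  refine csSup_le sig_nonempty ?_
  rintro v ⟨s, hs, rfl⟩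
  have hs' : t ≤ s := hs
  have hq0 : 0 ≤ qq E f L ε y s := qq_nonneg hL he hf hy (ht.trans hs')
  rcases le_or_gt t' s with h1 | h1
  · have h2 : trm E f L ε y t s ≤ trm E f L ε y t' s := by
      rw [trm, trm]
      nlinarith
    exact h2.trans (le_csSup (sig_bddAbove hL he hf hy (ht.trans h)) ⟨s, h1, rfl⟩)
  · have h2 : trm E f L ε y t s ≤ Pen E f L ε y s := by
      rw [trm]
      nlinarith
    have h3 : Pen E f L ε y s ≤ Pen E f L ε y t' := Pen_mono hL he hf hy (ht.trans hs') h1.le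
    exact (h2.trans h3).trans (Pen_le_sig hL he hf hy (ht.trans h))

theorem sig_upLip (hL : 0 ≤ L) (he : 0 < ε)
    (hf : ∀ a ∈ E, ∀ b ∈ E, dist (f a) (f b) ≤ L * dist a b)
    {y : X} (hy : y ∈ E) {t t' : ℝ} (ht : 0 ≤ t) (h : t ≤ t') :
    sig E f L ε y t' ≤ sig E f L ε y t + (L + 2 * mu L ε) * (t' - t) := by
  refine csSup_le sig_nonempty ?_
  rintro v ⟨s, hs, rfl⟩
  have hs' : t' ≤ s := hs
  have h1 : trm E f L ε y t s ≤ sig E f L ε y t :=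
    le_csSup (sig_bddAbove hL he hf hy ht) ⟨s, h.trans hs', rfl⟩
  have h2 : qq E f L ε y s ≤ L + 2 * mu L ε := qq_le hL he hf hy (ht.trans (h.trans hs'))
  have h3 : 0 ≤ qq E f L ε y s := qq_nonneg hL he hf hy (ht.trans (h.trans hs'))
  rw [trm] at h1 ⊢
  nlinarith

theorem sig_approx (hL : 0 ≤ L) (he : 0 < ε)
    (hf : ∀ a ∈ E, ∀ b ∈ E, dist (f a) (f b) ≤ L * dist a b)
    {y : X} (hy : y ∈ E) {t : ℝ} (ht : 0 ≤ t) {θ : ℝ} (hθ : 0 < θ) :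
    ∃ s, t ≤ s ∧ sig E f L ε y t < trm E f L ε y t s + θ := by
  obtain ⟨v, ⟨s, hs, rfl⟩, hv⟩ :=
    exists_lt_of_lt_csSup (sig_nonempty (E := E) (f := f) (L := L) (ε := ε) (y := y) (t := t))
      (show sig E f L ε y t - θ < sig E f L ε y t by linarith)
  exact ⟨s, hs, by linarith⟩

end Core

section Gext

variable {E : Set X} {f : X → ℝ} {L ε : ℝ}

theorem sig_dist_lip (hL : 0 ≤ L) (he : 0 < ε)
    (hf : ∀ a ∈ E, ∀ b ∈ E, dist (f a) (f b) ≤ L * dist a b)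
    {y : X} (hy : y ∈ E) (z z' : X) :
    sig E f L ε y (dist z y) ≤ sig E f L ε y (dist z' y) + (L + 2 * mu L ε) * dist z z' := by
  have hμ := mu_pos hL he
  rcases le_or_gt (dist z y) (dist z' y) with h | h
  · have h1 := sig_mono hL he hf hy (dist_nonneg : (0:ℝ) ≤ dist z y) h
    have h2 : 0 ≤ (L + 2 * mu L ε) * dist z z' := mul_nonneg (by linarith) dist_nonneg
    linarith
  · have h1 := sig_upLip hL he hf hy (dist_nonneg : (0:ℝ) ≤ dist z' y) h.le
    have h3 : dist z y - dist z' y ≤ dist z z' := by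
      have h4 := abs_dist_sub_le z z' y
      have h5 := le_abs_self (dist z y - dist z' y)
      linarith
    have h6 : (L + 2 * mu L ε) * (dist z y - dist z' y) ≤ (L + 2 * mu L ε) * dist z z' :=
      mul_le_mul_of_nonneg_left h3 (by linarith)
    linarith

theorem f_le_h (hL : 0 ≤ L) (he : 0 < ε)
    (hf : ∀ a ∈ E, ∀ b ∈ E, dist (f a) (f b) ≤ L * dist a b)
    {x y : X} (hx : x ∈ E) (hy : y ∈ E) :
    f x ≤ f y + sig E f L ε y (dist x y) := by
  have h1 : f x - f y ≤ Lam E f y (dist x y) := Lam_ge hL hf hy hx le_rfl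
  have h2 : 0 ≤ cc L ε (dist x y) * dist x y :=
    mul_nonneg (cc_nonneg hL he _) dist_nonneg
  have h3 := Pen_le_sig hL he hf hy (dist_nonneg : (0:ℝ) ≤ dist x y)
  rw [Pen] at h3
  linarith

theorem gext_bddBelow (hE : E.Nonempty) (hL : 0 ≤ L) (he : 0 < ε)
    (hf : ∀ a ∈ E, ∀ b ∈ E, dist (f a) (f b) ≤ L * dist a b) (z : X) :
    BddBelow (range fun y : E => f y + sig E f L ε y (dist z y)) := by
  obtain ⟨b, hb⟩ := hE
  refine ⟨f b - (L + 2 * mu L ε) * dist z b, ?_⟩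
  rintro v ⟨y, rfl⟩
  have h1 : f b ≤ f y + sig E f L ε y (dist b y) := f_le_h hL he hf hb y.2
  have h2 := sig_dist_lip hL he hf y.2 b z
  rw [dist_comm b z] at h2
  have h5 : f b - (L + 2 * mu L ε) * dist z b ≤ f ↑y + sig E f L ε (↑y) (dist z ↑y) := by
    linarith
  exact h5

theorem gext_le (hE : E.Nonempty) (hL : 0 ≤ L) (he : 0 < ε)
    (hf : ∀ a ∈ E, ∀ b ∈ E, dist (f a) (f b) ≤ L * dist a b)
    {y : X} (hy : y ∈ E) (z : X) :
    gext E f L ε z ≤ f y + sig E f L ε y (dist z y) := by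
  haveI := hE.to_subtype
  exact ciInf_le (gext_bddBelow hE hL he hf z) (⟨y, hy⟩ : E)

theorem gext_approx (hE : E.Nonempty) {z : X} {θ : ℝ} (hθ : 0 < θ) :
    ∃ y : E, f (y : X) + sig E f L ε (y : X) (dist z (y : X)) < gext E f L ε z + θ := by
  haveI := hE.to_subtype
  have h2 : (⨅ y : E, (f (y : X) + sig E f L ε (y : X) (dist z (y : X))))
      < gext E f L ε z + θ := by
    rw [show (⨅ y : E, (f (y : X) + sig E f L ε (y : X) (dist z (y : X)))) = gext E f L ε z
      from rfl]
    linarith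
  exact exists_lt_of_ciInf_lt h2

theorem le_gext (hE : E.Nonempty) (hL : 0 ≤ L) (he : 0 < ε)
    (hf : ∀ a ∈ E, ∀ b ∈ E, dist (f a) (f b) ≤ L * dist a b)
    {x : X} (hx : x ∈ E) : f x ≤ gext E f L ε x := by
  haveI := hE.to_subtype
  exact le_ciInf fun y => f_le_h hL he hf hx y.2

theorem gext_eq (hE : E.Nonempty) (hL : 0 ≤ L) (he : 0 < ε)
    (hf : ∀ a ∈ E, ∀ b ∈ E, dist (f a) (f b) ≤ L * dist a b)
    {x : X} (hx : x ∈ E) : gext E f L ε x = f x := by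
  refine le_antisymm ?_ (le_gext hE hL he hf hx)
  have h1 := gext_le hE hL he hf hx x
  rw [dist_self, sig_zero hL he hf hx, add_zero] at h1
  exact h1

theorem gext_le_add (hE : E.Nonempty) (hL : 0 ≤ L) (he : 0 < ε)
    (hf : ∀ a ∈ E, ∀ b ∈ E, dist (f a) (f b) ≤ L * dist a b) (z z' : X) :
    gext E f L ε z ≤ gext E f L ε z' + (L + 2 * mu L ε) * dist z z' := by
  haveI := hE.to_subtype
  have h1 : ∀ y : E, gext E f L ε z - (L + 2 * mu L ε) * dist z z'
      ≤ f (y : X) + sig E f L ε (y : X) (dist z' (y : X)) := by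
    intro y
    have h2 := gext_le hE hL he hf y.2 z
    have h3 := sig_dist_lip hL he hf y.2 z z'
    linarith
  have h4 : gext E f L ε z - (L + 2 * mu L ε) * dist z z' ≤ gext E f L ε z' := le_ciInf h1
  linarith

theorem gext_lip (hE : E.Nonempty) (hL : 0 ≤ L) (he : 0 < ε)
    (hf : ∀ a ∈ E, ∀ b ∈ E, dist (f a) (f b) ≤ L * dist a b) (z z' : X) :
    dist (gext E f L ε z) (gext E f L ε z') ≤ (L + 2 * mu L ε) * dist z z' := by
  rw [Real.dist_eq, abs_sub_le_iff]
  constructor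
  · have := gext_le_add hE hL he hf z z'
    linarith
  · have := gext_le_add hE hL he hf z' z
    rw [dist_comm z' z] at this
    linarith

end Gext

section Main

variable {E : Set X} {f : X → ℝ} {L ε : ℝ}

set_option maxHeartbeats 1000000 in
theorem main_local (hE : E.Nonempty) (hL : 0 ≤ L) (he : 0 < ε)
    (hf : ∀ a ∈ E, ∀ b ∈ E, dist (f a) (f b) ≤ L * dist a b)
    {x₀ : X} (hx₀ : x₀ ∈ E) {r δ ℓ : ℝ} (hr : 0 < r) (hδ : 0 < δ) (hℓ : 0 ≤ ℓ)
    (hloc : ∀ a ∈ ball x₀ r ∩ E, ∀ b ∈ ball x₀ r ∩ E, dist (f a) (f b) ≤ ℓ * dist a b) :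
    ∃ ρ > 0, ∀ z₁ ∈ ball x₀ ρ, ∀ z₂ ∈ ball x₀ ρ,
      dist (gext E f L ε z₁) (gext E f L ε z₂) ≤ (ℓ + δ) * dist z₁ z₂ := by
  have hμ : 0 < mu L ε := mu_pos hL he
  have hμ1 : mu L ε ≤ 1 := mu_le_one hL he
  have hμe : 8 * mu L ε ≤ ε := eight_mu_le hL he
  set μ := mu L ε with hμdef
  set m : ℝ := min (r / 2) ((δ / (2 * μ)) ^ 2) with hmdef
  have hm0 : 0 < m :=
    lt_min (by linarith only [hr]) (pow_pos (div_pos hδ (by linarith only [hμ])) 2)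
  set B₁ : ℝ := 4 * (L + 1) / μ with hB₁def
  have hB₁0 : 0 < B₁ := div_pos (by linarith only [hL]) hμ
  have hminpos : 0 < min (m / 3) ((m / 3) ^ 2) :=
    lt_min (by linarith only [hm0]) (pow_pos (by linarith only [hm0]) 2)
  set R₀ : ℝ := min (min 1 (r / 4)) (min (m / 12) (min (m / 3) ((m / 3) ^ 2) / B₁)) with hR₀def
  have hR₀ : 0 < R₀ :=
    lt_min (lt_min one_pos (by linarith only [hr]))
      (lt_min (by linarith only [hm0]) (div_pos hminpos hB₁0))
  have hR₀1 : R₀ ≤ 1 := le_trans (min_le_left _ _) (min_le_left _ _)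
  have hR₀r : R₀ ≤ r / 4 := le_trans (min_le_left _ _) (min_le_right _ _)
  have hR₀m : R₀ ≤ m / 12 := le_trans (min_le_right _ _) (min_le_left _ _)
  have hR₀B : B₁ * R₀ ≤ min (m / 3) ((m / 3) ^ 2) := by
    have h1 : R₀ ≤ min (m / 3) ((m / 3) ^ 2) / B₁ :=
      le_trans (min_le_right _ _) (min_le_right _ _)
    rw [le_div_iff₀ hB₁0] at h1
    rw [mul_comm]
    exact h1
  set Xx : ℝ := B₁ * R₀ with hXdef
  have hX0 : 0 < Xx := mul_pos hB₁0 hR₀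
  have hμX : μ * Xx = 4 * (L + 1) * R₀ := by
    rw [hXdef, hB₁def]
    field_simp
  set S : ℝ := 4 * R₀ + Real.sqrt Xx + Xx with hSdef
  have hsqXnn : 0 ≤ Real.sqrt Xx := Real.sqrt_nonneg Xx
  have hS0 : 0 < S := by
    rw [hSdef]; linarith only [hsqXnn, hX0, hR₀]
  set A : ℝ := 3 * L + 2 * ε + 3 with hAdef
  have hA0 : 0 < A := by rw [hAdef]; linarith only [hL, he]
  have hsq1 : Real.sqrt (R₀ / 2) ≤ 1 := by
    calc Real.sqrt (R₀ / 2) ≤ Real.sqrt 1 := Real.sqrt_le_sqrt (by linarith only [hR₀1])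
    _ = 1 := Real.sqrt_one
  have hsqpos : 0 < Real.sqrt (R₀ / 2) := Real.sqrt_pos.2 (by linarith only [hR₀])
  set ρ : ℝ := μ * Real.sqrt (R₀ / 2) * (R₀ / 2) / (2 * A) with hρdef
  have hρ0 : 0 < ρ := by
    rw [hρdef]
    exact div_pos (mul_pos (mul_pos hμ hsqpos) (by linarith only [hR₀]))
      (by linarith only [hA0])
  have hcc2 : cc L ε (R₀ / 2) = μ * Real.sqrt (R₀ / 2) := by
    rw [cc, min_eq_right hsq1]
  have hF3 : cc L ε (R₀ / 2) * (R₀ / 2) = 2 * A * ρ := by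
    rw [hcc2, hρdef]
    field_simp
  have hρR : ρ ≤ R₀ / 2 := by
    rw [hρdef, div_le_iff₀ (by linarith only [hA0])]
    have h1 : μ * Real.sqrt (R₀ / 2) ≤ 1 :=
      mul_le_one₀ hμ1 (Real.sqrt_nonneg _) hsq1
    have h2 : μ * Real.sqrt (R₀ / 2) * (R₀ / 2) ≤ 1 * (R₀ / 2) :=
      mul_le_mul_of_nonneg_right h1 (by linarith only [hR₀])
    have h3 : R₀ / 2 ≤ R₀ / 2 * (2 * A) :=
      le_mul_of_one_le_right (by linarith only [hR₀]) (by rw [hAdef]; linarith only [hL, he])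
    linarith only [h2, h3]
  -- cutoff fact
  have hcut : ∀ s, S < s → ∀ t, 0 ≤ t → t ≤ R₀ + ρ → (L + 1) * t ≤ cc L ε s * (s - t) := by
    intro s hs t ht htT
    have hT2 : t ≤ 2 * R₀ := by linarith only [htT, hρR, hR₀]
    have hs4 : 4 * R₀ < s := by
      rw [hSdef] at hs; linarith only [hs, hsqXnn, hX0]
    have hs0 : 0 < s := by linarith only [hs4, hR₀]
    have hst2 : s / 2 ≤ s - t := by linarith only [hs4, hT2]
    have hLt : (L + 1) * t ≤ (L + 1) * (2 * R₀) :=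
      mul_le_mul_of_nonneg_left hT2 (by linarith only [hL])
    rcases le_or_gt 1 s with h1s | h1s
    · have h1 : (1 : ℝ) ≤ Real.sqrt s := by
        calc (1 : ℝ) = Real.sqrt 1 := Real.sqrt_one.symm
        _ ≤ Real.sqrt s := Real.sqrt_le_sqrt h1s
      have hc : cc L ε s = μ := by rw [cc, min_eq_left h1, mul_one]
      have hXs : Xx < s := by
        rw [hSdef] at hs; linarith only [hs, hsqXnn, hR₀]
      rw [hc]
      have hp1 : μ * (s / 2) ≤ μ * (s - t) := mul_le_mul_of_nonneg_left hst2 hμ.le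
      have hp2 : μ * Xx < μ * s := mul_lt_mul_of_pos_left hXs hμ
      linarith only [hLt, hμX, hp1, hp2]
    · have hsle : Real.sqrt s ≤ 1 := by
        calc Real.sqrt s ≤ Real.sqrt 1 := Real.sqrt_le_sqrt h1s.le
        _ = 1 := Real.sqrt_one
      have hc : cc L ε s = μ * Real.sqrt s := by rw [cc, min_eq_right hsle]
      have hms := Real.mul_self_sqrt hs0.le
      have hss : s ≤ Real.sqrt s := by
        have hfact : 0 ≤ Real.sqrt s * (1 - Real.sqrt s) :=
          mul_nonneg (Real.sqrt_nonneg s) (sub_nonneg.2 hsle)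
        nlinarith only [hfact, hms]
      have hsX : Real.sqrt Xx < s := by
        rw [hSdef] at hs; linarith only [hs, hX0, hR₀]
      have hs2X : Xx < s ^ 2 := by
        nlinarith only [mul_pos (sub_pos.2 hsX) (show (0:ℝ) < s + Real.sqrt Xx by
            linarith only [hsX, hsqXnn]),
          Real.sq_sqrt hX0.le]
      rw [hc]
      have hp1 : μ * s * (s / 2) ≤ μ * s * (s - t) :=
        mul_le_mul_of_nonneg_left hst2 (mul_nonneg hμ.le hs0.le)
      have hp2 : μ * s * (s - t) ≤ μ * Real.sqrt s * (s - t) :=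
        mul_le_mul_of_nonneg_right (mul_le_mul_of_nonneg_left hss hμ.le)
          (by linarith only [hst2, hs0])
      have hp0 : μ * Xx < μ * s ^ 2 := mul_lt_mul_of_pos_left hs2X hμ
      nlinarith only [hLt, hμX, hp0, hp1, hp2]
  have hSm : S ≤ m := by
    have h1 : Xx ≤ m / 3 := le_trans hR₀B (min_le_left _ _)
    have h2 : Xx ≤ (m / 3) ^ 2 := le_trans hR₀B (min_le_right _ _)
    have h3 : Real.sqrt Xx ≤ m / 3 := by
      calc Real.sqrt Xx ≤ Real.sqrt ((m / 3) ^ 2) := Real.sqrt_le_sqrt h2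
      _ = m / 3 := Real.sqrt_sq (by linarith only [hm0])
    rw [hSdef]
    linarith only [hR₀m, h1, h3]
  have h2cS : 2 * cc L ε S ≤ δ := by
    have h1 : cc L ε S ≤ μ * Real.sqrt S :=
      mul_le_mul_of_nonneg_left (min_le_right _ _) hμ.le
    have h2 : Real.sqrt S ≤ δ / (2 * μ) := by
      calc Real.sqrt S ≤ Real.sqrt ((δ / (2 * μ)) ^ 2) :=
            Real.sqrt_le_sqrt (le_trans hSm (min_le_right _ _))
      _ = δ / (2 * μ) := Real.sqrt_sq (by positivity)
    have h4 : μ * Real.sqrt S ≤ μ * (δ / (2 * μ)) :=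
      mul_le_mul_of_nonneg_left h2 hμ.le
    have h5 : μ * (δ / (2 * μ)) = δ / 2 := by field_simp
    linarith only [h1, h4, h5]
  have hSr : R₀ + S < r := by
    have h1 : m ≤ r / 2 := min_le_left _ _
    linarith only [hSm, hR₀r, hr, h1]
  -- key one-sided estimate
  have key : ∀ w₁ ∈ ball x₀ ρ, ∀ w₂ ∈ ball x₀ ρ,
      gext E f L ε w₁ - gext E f L ε w₂ ≤ (ℓ + δ) * dist w₁ w₂ := by
    intro w₁ hw₁ w₂ hw₂
    have hd1 : dist w₁ x₀ < ρ := mem_ball.1 hw₁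
    have hd2 : dist w₂ x₀ < ρ := mem_ball.1 hw₂
    have hldnn : 0 ≤ (ℓ + δ) * dist w₁ w₂ :=
      mul_nonneg (by linarith only [hℓ, hδ]) dist_nonneg
    refine le_of_forall_pos_le_add fun η hη => ?_
    set θ : ℝ := min (η / 2) (ρ / 2) with hθdef
    have hθ0 : 0 < θ := lt_min (by linarith only [hη]) (by linarith only [hρ0])
    have hθη : θ ≤ η / 2 := min_le_left _ _
    have hθρ : θ ≤ ρ / 2 := min_le_right _ _
    haveI := hE.to_subtype
    obtain ⟨y, hy⟩ := gext_approx (L := L) (ε := ε) hE (z := w₂) hθ0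
    set yy : X := (y : X) with hyydef
    have hyE : yy ∈ E := y.2
    set t₁ : ℝ := dist w₁ yy with ht₁def
    set t₂ : ℝ := dist w₂ yy with ht₂def
    have ht₂0 : (0:ℝ) ≤ t₂ := dist_nonneg
    have ht₁0' : (0:ℝ) ≤ t₁ := dist_nonneg
    -- far exclusion
    have hynear : dist x₀ yy < R₀ := by
      by_contra hfar
      push_neg at hfar
      have hxy2 : dist x₀ yy ≤ ρ + t₂ := by
        calc dist x₀ yy ≤ dist x₀ w₂ + dist w₂ yy := dist_triangle _ _ _
        _ ≤ ρ + t₂ := by rw [dist_comm x₀ w₂]; linarith only [hd2]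
      have ht₂l : R₀ / 2 ≤ t₂ := by linarith only [hfar, hxy2, hρR]
      have hterm : trm E f L ε yy t₂ (t₂ + 2 * ρ) ≤ sig E f L ε yy t₂ :=
        le_csSup (sig_bddAbove hL he hf hyE ht₂0) ⟨t₂ + 2 * ρ, by
          simp only [mem_Ici]; linarith only [hρ0], rfl⟩
      have hLam : f x₀ - f yy ≤ Lam E f yy (t₂ + 2 * ρ) :=
        Lam_ge hL hf hyE hx₀ (by linarith only [hxy2, hρ0])
      have hccs : 2 * A * ρ ≤ cc L ε (t₂ + 2 * ρ) * (t₂ + 2 * ρ) := by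
        rw [← hF3]
        exact cc_mul_mono hL he (by linarith only [hR₀]) (by linarith only [ht₂l, hρ0])
      have hqs : qq E f L ε yy (t₂ + 2 * ρ) ≤ L + 2 * μ :=
        qq_le hL he hf hyE (by linarith only [ht₂0, hρ0])
      have hqq2 : qq E f L ε yy (t₂ + 2 * ρ) * (2 * ρ) ≤ (L + 2 * μ) * (2 * ρ) :=
        mul_le_mul_of_nonneg_right hqs (by linarith only [hρ0])
      have e : trm E f L ε yy t₂ (t₂ + 2 * ρ) =
          Lam E f yy (t₂ + 2 * ρ) + cc L ε (t₂ + 2 * ρ) * (t₂ + 2 * ρ)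
            - qq E f L ε yy (t₂ + 2 * ρ) * (2 * ρ) := by
        rw [trm, Pen]; ring
      rw [e] at hterm
      have hup : gext E f L ε w₂ ≤ f x₀ + (L + 1) * ρ := by
        have h1 := gext_le hE hL he hf hx₀ w₂
        have h2 := sig_le hL he hf hx₀ (dist_nonneg : (0:ℝ) ≤ dist w₂ x₀)
        have h3 : (L + 1) * dist w₂ x₀ ≤ (L + 1) * ρ :=
          mul_le_mul_of_nonneg_left hd2.le (by linarith only [hL])
        linarith only [h1, h2, h3]
      have hbig : f x₀ + 2 * A * ρ - (L + 2 * μ) * (2 * ρ) < f x₀ + (L + 1) * ρ + θ := by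
        linarith only [hterm, hLam, hccs, hqq2, hy, hup]
      rw [hAdef] at hbig
      have hco : 0 < 3 * L + 4 * ε - 4 * μ + 4.5 := by linarith only [hμe, hL, he]
      have hprod : 0 < (3 * L + 4 * ε - 4 * μ + 4.5) * ρ := mul_pos hco hρ0
      nlinarith only [hbig, hprod, hθρ]
    rcases le_or_gt t₁ t₂ with hcase | hcase
    · have h1 := sig_mono hL he hf hyE ht₁0' hcase
      have h2 := gext_le hE hL he hf hyE w₁
      linarith only [h1, h2, hy, hθη, hη, hldnn]
    · have ht₁T : t₁ ≤ R₀ + ρ := by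
        calc t₁ ≤ dist w₁ x₀ + dist x₀ yy := dist_triangle _ _ _
        _ ≤ R₀ + ρ := by linarith only [hd1, hynear]
      have ht₁0 : 0 < t₁ := lt_of_le_of_lt ht₂0 hcase
      obtain ⟨s₁, hs₁t, happ⟩ := sig_approx hL he hf hyE ht₁0' hθ0
      rcases le_or_gt (trm E f L ε yy t₁ s₁) 0 with hneg | hpos
      · have h2 := gext_le hE hL he hf hyE w₁
        have h3 : 0 ≤ sig E f L ε yy t₂ := sig_nonneg hL he hf hyE ht₂0
        linarith only [h2, h3, happ, hneg, hy, hθη, hη, hldnn]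
      · have hs₁S : s₁ ≤ S := by
          by_contra hgt
          push_neg at hgt
          have h4 := hcut s₁ hgt t₁ ht₁0' ht₁T
          have h5 := trm_le hL he hf hyE ht₁0' hs₁t (lt_of_lt_of_le ht₁0 hs₁t)
          linarith only [h4, h5, hpos]
        have hs₁0 : 0 < s₁ := lt_of_lt_of_le ht₁0 hs₁t
        have hyball : yy ∈ ball x₀ r := by
          rw [mem_ball, dist_comm]
          linarith only [hynear, hR₀r, hr]
        have hsub : E ∩ closedBall yy s₁ ⊆ ball x₀ r := by
          rintro x ⟨hxE, hxb⟩
          rw [mem_ball]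
          have h6 : dist x yy ≤ s₁ := hxb
          have h7 : dist x x₀ ≤ dist x yy + dist yy x₀ := dist_triangle _ _ _
          have h8 : dist yy x₀ < R₀ := by rw [dist_comm]; exact hynear
          linarith only [h6, h7, h8, hSr, hs₁S]
        have hLamloc : Lam E f yy s₁ ≤ ℓ * s₁ :=
          Lam_le_local hloc hyE hyball hs₁0.le hℓ hsub
        have hql : qq E f L ε yy s₁ ≤ ℓ + δ := by
          have h7 : Pen E f L ε yy s₁ / s₁ = Lam E f yy s₁ / s₁ + cc L ε s₁ := by
            rw [Pen, add_div, mul_div_assoc, div_self hs₁0.ne', mul_one]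
          have h8 : Lam E f yy s₁ / s₁ ≤ ℓ := by
            rw [div_le_iff₀ hs₁0]
            exact hLamloc
          have h9 : cc L ε s₁ ≤ cc L ε S := cc_mono hL he hs₁S
          rw [qq, h7]
          linarith only [h8, h9, h2cS]
        have hlow : trm E f L ε yy t₂ s₁ ≤ sig E f L ε yy t₂ :=
          le_csSup (sig_bddAbove hL he hf hyE ht₂0) ⟨s₁, by
            simp only [mem_Ici]; linarith only [hcase, hs₁t], rfl⟩
        have h10 := gext_le hE hL he hf hyE w₁
        have ht₁₂ : t₁ - t₂ ≤ dist w₁ w₂ := by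
          have h11 := abs_dist_sub_le w₁ w₂ yy
          have h12 := le_abs_self (dist w₁ yy - dist w₂ yy)
          linarith only [h11, h12]
        have hq0' : 0 ≤ qq E f L ε yy s₁ := qq_nonneg hL he hf hyE hs₁0.le
        have etrm : trm E f L ε yy t₁ s₁ =
            trm E f L ε yy t₂ s₁ + qq E f L ε yy s₁ * (t₁ - t₂) := by
          rw [trm, trm]; ring
        have h13 : qq E f L ε yy s₁ * (t₁ - t₂) ≤ (ℓ + δ) * (t₁ - t₂) :=
          mul_le_mul_of_nonneg_right hql (by linarith only [hcase])
        have h14 : (ℓ + δ) * (t₁ - t₂) ≤ (ℓ + δ) * dist w₁ w₂ :=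
          mul_le_mul_of_nonneg_left ht₁₂ (by linarith only [hℓ, hδ])
        linarith only [h10, happ, etrm, hlow, h13, h14, hy, hθη, hη]
  refine ⟨ρ, hρ0, ?_⟩
  intro z₁ hz₁ z₂ hz₂
  rw [Real.dist_eq, abs_sub_le_iff]
  constructor
  · exact key z₁ hz₁ z₂ hz₂
  · have := key z₂ hz₂ z₁ hz₁
    rwa [dist_comm z₂ z₁] at this

end Main


end DMGP

open DMGP

set_option maxHeartbeats 1000000 in
/-- **Di Marino–Gigli–Pratelli extension theorem.** Any real-valued Lipschitz function on a
non-empty subset `E` of a metric space `X` admits a Lipschitz extension to `X` whose global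
Lipschitz constant exceeds the original one at most by `ε`, and whose asymptotic slope
coincides on `E` with the asymptotic slope of the original function (computed in `E`). -/
theorem lipschitz_extension_asympSlope {X : Type*} [MetricSpace X] (E : Set X)
    (hE : E.Nonempty) (f : X → ℝ) (hf : ∃ K, LipschitzOnWith K f E) (ε : ℝ) (hε : 0 < ε) :
    ∃ g : X → ℝ, (∃ K, LipschitzWith K g) ∧ (∀ x ∈ E, g x = f x) ∧
      lipOn g Set.univ ≤ lipOn f E + ENNReal.ofReal ε ∧
      ∀ x ∈ E, asympSlope g x = asympSlopeOn f E x := by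
  classical
  obtain ⟨K, hK⟩ := hf
  have hlipE : lipOn f E ≤ (K : ℝ≥0∞) := DMGP.lipOn_le' fun x hx y hy => hK hx hy
  have hfinE : lipOn f E ≠ ⊤ := (hlipE.trans_lt ENNReal.coe_lt_top).ne
  set L : ℝ := (lipOn f E).toReal with hLdef
  have hL0 : 0 ≤ L := ENNReal.toReal_nonneg
  have hfreal : ∀ a ∈ E, ∀ b ∈ E, dist (f a) (f b) ≤ L * dist a b := fun a ha b hb =>
    DMGP.dist_le_lipOn ha hb hfinE
  have hμ : 0 < mu L ε := mu_pos hL0 hε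
  have hμe : 8 * mu L ε ≤ ε := eight_mu_le hL0 hε
  refine ⟨gext E f L ε, ?_, ?_, ?_, ?_⟩
  · refine ⟨(L + 2 * mu L ε).toNNReal, LipschitzWith.of_dist_le_mul fun z z' => ?_⟩
    rw [Real.coe_toNNReal _ (by linarith)]
    exact gext_lip hE hL0 hε hfreal z z'
  · exact fun x hx => gext_eq hE hL0 hε hfreal hx
  · have h1 : lipOn (gext E f L ε) Set.univ ≤ ENNReal.ofReal (L + 2 * mu L ε) :=
      lipOn_le_ofReal (by linarith) fun a _ b _ => gext_lip hE hL0 hε hfreal a b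
    refine h1.trans ?_
    calc ENNReal.ofReal (L + 2 * mu L ε) ≤ ENNReal.ofReal (L + ε) :=
          ENNReal.ofReal_le_ofReal (by linarith)
    _ = ENNReal.ofReal L + ENNReal.ofReal ε := ENNReal.ofReal_add hL0 hε.le
    _ = lipOn f E + ENNReal.ofReal ε := by rw [hLdef, ENNReal.ofReal_toReal hfinE]
  · intro x₀ hx₀
    show (⨅ (r : ℝ) (_ : 0 < r), lipOn (gext E f L ε) (Metric.ball x₀ r)) =
      ⨅ (r : ℝ) (_ : 0 < r), lipOn f (Metric.ball x₀ r ∩ E)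
    have hballfin : ∀ r : ℝ, lipOn f (Metric.ball x₀ r ∩ E) ≠ ⊤ := fun r =>
      ((DMGP.lipOn_mono_eqOn inter_subset_right fun _ _ => rfl).trans_lt hfinE.lt_top).ne
    refine le_antisymm ?_ ?_
    · refine ENNReal.le_of_forall_pos_le_add fun η hη htop => ?_
      set η₂ : NNReal := η / 2 with hη₂def
      have hη₂ : 0 < η₂ := by
        rw [hη₂def]
        exact div_pos hη (by norm_num)
      have hη₂R : (0:ℝ) < (η₂ : ℝ) := hη₂
      have hlt : (⨅ (r : ℝ) (_ : 0 < r), lipOn f (Metric.ball x₀ r ∩ E)) <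
          (⨅ (r : ℝ) (_ : 0 < r), lipOn f (Metric.ball x₀ r ∩ E)) + (η₂ : ℝ≥0∞) :=
        ENNReal.lt_add_right htop.ne (by exact_mod_cast hη₂.ne')
      rw [iInf_lt_iff] at hlt
      obtain ⟨r, hlt⟩ := hlt
      rw [iInf_lt_iff] at hlt
      obtain ⟨hr0, hrlt⟩ := hlt
      set ℓ : ℝ := (lipOn f (Metric.ball x₀ r ∩ E)).toReal with hldef
      have hl0 : 0 ≤ ℓ := ENNReal.toReal_nonneg
      have hloc : ∀ a ∈ Metric.ball x₀ r ∩ E, ∀ b ∈ Metric.ball x₀ r ∩ E,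
          dist (f a) (f b) ≤ ℓ * dist a b := fun a ha b hb =>
        DMGP.dist_le_lipOn ha hb (hballfin r)
      obtain ⟨ρ, hρ0, hρ⟩ := main_local hE hL0 hε hfreal hx₀ hr0 hη₂R hl0 hloc
      have hs1 : (⨅ (r' : ℝ) (_ : 0 < r'), lipOn (gext E f L ε) (Metric.ball x₀ r')) ≤
          lipOn (gext E f L ε) (Metric.ball x₀ ρ) := iInf₂_le ρ hρ0
      have hs2 : lipOn (gext E f L ε) (Metric.ball x₀ ρ) ≤ ENNReal.ofReal (ℓ + (η₂ : ℝ)) :=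
        lipOn_le_ofReal (by linarith) fun a ha b hb => hρ a ha b hb
      have hs3 : ENNReal.ofReal (ℓ + (η₂ : ℝ)) =
          lipOn f (Metric.ball x₀ r ∩ E) + (η₂ : ℝ≥0∞) := by
        rw [ENNReal.ofReal_add hl0 hη₂R.le, hldef, ENNReal.ofReal_toReal (hballfin r),
          ENNReal.ofReal_coe_nnreal]
      have hs5 : ((⨅ (r' : ℝ) (_ : 0 < r'), lipOn f (Metric.ball x₀ r' ∩ E)) + (η₂ : ℝ≥0∞))
          + (η₂ : ℝ≥0∞) =
          (⨅ (r' : ℝ) (_ : 0 < r'), lipOn f (Metric.ball x₀ r' ∩ E)) + (η : ℝ≥0∞) := by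
        rw [add_assoc, ← ENNReal.coe_add]
        congr 1
        rw [hη₂def]
        norm_cast
        exact add_halves η
      calc (⨅ (r' : ℝ) (_ : 0 < r'), lipOn (gext E f L ε) (Metric.ball x₀ r'))
          ≤ ENNReal.ofReal (ℓ + (η₂ : ℝ)) := hs1.trans hs2
      _ = lipOn f (Metric.ball x₀ r ∩ E) + (η₂ : ℝ≥0∞) := hs3
      _ ≤ ((⨅ (r' : ℝ) (_ : 0 < r'), lipOn f (Metric.ball x₀ r' ∩ E)) + (η₂ : ℝ≥0∞))
          + (η₂ : ℝ≥0∞) := add_le_add_left hrlt.le _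
      _ = (⨅ (r' : ℝ) (_ : 0 < r'), lipOn f (Metric.ball x₀ r' ∩ E)) + (η : ℝ≥0∞) := hs5
    · refine le_iInf fun ρ => le_iInf fun hρ0 => ?_
      calc (⨅ (r' : ℝ) (_ : 0 < r'), lipOn f (Metric.ball x₀ r' ∩ E))
          ≤ lipOn f (Metric.ball x₀ ρ ∩ E) := iInf₂_le ρ hρ0
      _ ≤ lipOn (gext E f L ε) (Metric.ball x₀ ρ) :=
          DMGP.lipOn_mono_eqOn inter_subset_left fun a ha =>
            (gext_eq hE hL0 hε hfreal ha.2).symm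
end

section
/- Every real Banach space embeds linearly and isometrically into a Banach space having the metric approximation property. -/
open Metric Set Filter ENNReal

universe u

noncomputable section MAPaux

/-- The closed unit ball of the dual, as an index type with the discrete topology. -/
def MAPIdx (B : Type u) [NormedAddCommGroup B] [NormedSpace ℝ B] : Type u :=
  {f : B →L[ℝ] ℝ // ‖f‖ ≤ 1}

instance (B : Type u) [NormedAddCommGroup B] [NormedSpace ℝ B] :
    TopologicalSpace (MAPIdx B) := ⊥

instance (B : Type u) [NormedAddCommGroup B] [NormedSpace ℝ B] :
    DiscreteTopology (MAPIdx B) := ⟨rfl⟩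

/-- `ℓ∞` of the dual unit ball, realized as bounded (automatically continuous) functions. -/
abbrev MAPSpace (B : Type u) [NormedAddCommGroup B] [NormedSpace ℝ B] : Type u :=
  BoundedContinuousFunction (MAPIdx B) ℝ

variable {B : Type u} [NormedAddCommGroup B] [NormedSpace ℝ B]

/-- The underlying function of the embedding of `B` into `MAPSpace B`. -/
def MAPembedFun (x : B) : MAPSpace B :=
  BoundedContinuousFunction.ofNormedAddCommGroupDiscrete (fun f : MAPIdx B => f.1 x) ‖x‖
    (fun f => by
      calc ‖f.1 x‖ ≤ ‖f.1‖ * ‖x‖ := f.1.le_opNorm x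
        _ ≤ 1 * ‖x‖ := mul_le_mul_of_nonneg_right f.2 (norm_nonneg x)
        _ = ‖x‖ := one_mul _)

@[simp] theorem MAPembedFun_apply (x : B) (f : MAPIdx B) : MAPembedFun x f = f.1 x := rfl

theorem MAPembedFun_norm (x : B) : ‖MAPembedFun x‖ = ‖x‖ := by
  apply le_antisymm
  · rw [BoundedContinuousFunction.norm_le (norm_nonneg x)]
    intro f
    calc ‖MAPembedFun x f‖ = ‖f.1 x‖ := rfl
      _ ≤ ‖f.1‖ * ‖x‖ := f.1.le_opNorm x
      _ ≤ 1 * ‖x‖ := mul_le_mul_of_nonneg_right f.2 (norm_nonneg x)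
      _ = ‖x‖ := one_mul _
  · obtain ⟨g, hg1, hgx⟩ := exists_dual_vector'' ℝ x
    calc ‖x‖ = ‖g x‖ := by rw [hgx]; exact (abs_of_nonneg (norm_nonneg x)).symm
      _ = ‖MAPembedFun x ⟨g, hg1⟩‖ := rfl
      _ ≤ ‖MAPembedFun x‖ := (MAPembedFun x).norm_coe_le_norm _

/-- The canonical linear isometric embedding of `B` into `MAPSpace B`. -/
def MAPembed : B →ₗᵢ[ℝ] MAPSpace B where
  toFun := MAPembedFun
  map_add' x y := by ext f; simp
  map_smul' c x := by ext f; simp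
  norm_map' := MAPembedFun_norm

/-- If two reals fall in the same `δ`-grid cell, they are `δ`-close. -/
theorem MAP_floor_close {δ a b : ℝ} (hδ : 0 < δ) (h : ⌊a / δ⌋ = ⌊b / δ⌋) :
    |a - b| ≤ δ := by
  have h' : ((⌊a / δ⌋ : ℤ) : ℝ) = ((⌊b / δ⌋ : ℤ) : ℝ) := by exact_mod_cast h
  have h1 := Int.floor_le (a / δ)
  have h2 := Int.lt_floor_add_one (a / δ)
  have h3 := Int.floor_le (b / δ)
  have h4 := Int.lt_floor_add_one (b / δ)
  have key : ∀ u v : ℝ, u / δ - v / δ < 1 → u - v ≤ δ := by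
    intro u v huv
    have h5 : (u - v) / δ < 1 := by rw [sub_div]; linarith
    exact ((div_lt_one hδ).1 h5).le
  rw [abs_sub_le_iff]
  exact ⟨key a b (by linarith), key b a (by linarith)⟩

end MAPaux

/-- Every real Banach space embeds linearly and isometrically into a Banach space having
the metric approximation property. -/
theorem exists_embedding_into_metric_approximation_property (B : Type u)
    [NormedAddCommGroup B] [NormedSpace ℝ B] [CompleteSpace B] :
    ∃ (M : Type u) (_ : NormedAddCommGroup M) (_ : NormedSpace ℝ M),
      CompleteSpace M ∧ Nonempty (B →ₗᵢ[ℝ] M) ∧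
      ∀ (ε : ℝ), 0 < ε → ∀ K : Set M, IsCompact K →
        ∃ p : M →L[ℝ] M, FiniteDimensional ℝ ↥(LinearMap.range (p : M →ₗ[ℝ] M)) ∧
          ‖p‖ ≤ 1 ∧ ∀ x ∈ K, ‖p x - x‖ ≤ ε := by
  classical
  refine ⟨MAPSpace B, inferInstance, inferInstance, inferInstance, ⟨MAPembed⟩, ?_⟩
  intro ε hε K hK
  set ι := MAPIdx B
  set M := MAPSpace B
  -- a finite ε/3-net of K
  obtain ⟨t, htfin, htK⟩ := (Metric.totallyBounded_iff).1 hK.totallyBounded (ε / 3)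
    (by linarith)
  haveI : Fintype ↥t := htfin.fintype
  set δ : ℝ := ε / 3 with hδdef
  have hδ : 0 < δ := by positivity
  -- the grid map
  set q : ι → (↥t → ℤ) := fun γ i => ⌊(i : M) γ / δ⌋ with hq
  -- its range is finite
  have hrange : (Set.range q).Finite := by
    apply Set.Finite.subset
      (Set.Finite.pi (fun i : ↥t => Set.finite_Icc (-⌈‖(i : M)‖ / δ⌉) ⌈‖(i : M)‖ / δ⌉))
    rintro v ⟨γ, rfl⟩
    intro i _
    simp only [Set.mem_Icc, hq]
    have hb : |(i : M) γ| ≤ ‖(i : M)‖ := (i : M).norm_coe_le_norm γ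
    have hb1 : (i : M) γ / δ ≤ ‖(i : M)‖ / δ :=
      div_le_div_of_nonneg_right ((abs_le.1 hb).2) hδ.le
    have hb2 : -(‖(i : M)‖ / δ) ≤ (i : M) γ / δ := by
      rw [← neg_div]
      exact div_le_div_of_nonneg_right ((abs_le.1 hb).1) hδ.le
    constructor
    · calc -⌈‖(i : M)‖ / δ⌉ = ⌊-(‖(i : M)‖ / δ)⌋ := (Int.floor_neg).symm
        _ ≤ ⌊(i : M) γ / δ⌋ := Int.floor_mono hb2
    · calc ⌊(i : M) γ / δ⌋ ≤ ⌊‖(i : M)‖ / δ⌋ := Int.floor_mono hb1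
        _ ≤ ⌈‖(i : M)‖ / δ⌉ := Int.floor_le_ceil _
  haveI : Fintype ↥(Set.range q) := hrange.fintype
  -- a section of q on its range
  have hsec : ∀ v : ↥(Set.range q), ∃ γ : ι, q γ = (v : ↥t → ℤ) := fun v => v.2
  choose s hs using hsec
  -- the retraction γ ↦ s (q γ)
  set g : ι → ι := fun γ => s ⟨q γ, Set.mem_range_self γ⟩ with hg
  have hgq : ∀ γ, q (g γ) = q γ := fun γ => hs _
  -- the finite rank operator
  set pfun : M → M := fun f =>
    BoundedContinuousFunction.ofNormedAddCommGroupDiscrete (fun γ => f (g γ)) ‖f‖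
      (fun γ => f.norm_coe_le_norm (g γ)) with hpfun
  have hpapply : ∀ (f : M) (γ : ι), pfun f γ = f (g γ) := fun f γ => rfl
  set plin : M →ₗ[ℝ] M :=
    { toFun := pfun
      map_add' := fun f₁ f₂ => by ext γ; rfl
      map_smul' := fun c f => by ext γ; rfl } with hplin
  have hpnorm : ∀ f : M, ‖plin f‖ ≤ 1 * ‖f‖ := fun f => by
    rw [one_mul, BoundedContinuousFunction.norm_le (norm_nonneg f)]
    intro γ
    exact f.norm_coe_le_norm (g γ)
  set p : M →L[ℝ] M := plin.mkContinuous 1 hpnorm with hp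
  refine ⟨p, ?_, ?_, ?_⟩
  · -- finite rank: p factors through functions on the finite range of q
    set h1 : M →ₗ[ℝ] (↥(Set.range q) → ℝ) :=
      { toFun := fun f v => f (s v)
        map_add' := fun f₁ f₂ => rfl
        map_smul' := fun c f => rfl }
    set h2 : (↥(Set.range q) → ℝ) →ₗ[ℝ] M :=
      { toFun := fun u =>
          BoundedContinuousFunction.ofNormedAddCommGroupDiscrete
            (fun γ => u ⟨q γ, Set.mem_range_self γ⟩) ‖u‖
            (fun γ => norm_le_pi_norm u _)
        map_add' := fun u₁ u₂ => by ext γ; rfl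
        map_smul' := fun c u => by ext γ; rfl }
    have hfact : (p : M →ₗ[ℝ] M) = h2.comp h1 := by
      ext f γ
      rfl
    rw [hfact]
    have hle : LinearMap.range (h2.comp h1) ≤ LinearMap.range h2 :=
      LinearMap.range_comp_le_range h1 h2
    exact Submodule.finiteDimensional_of_le hle
  · exact plin.mkContinuous_norm_le zero_le_one hpnorm
  · -- the approximation estimate
    intro f hf
    -- p moves net points by at most δ
    have hnet : ∀ y ∈ t, ‖p y - y‖ ≤ δ := by
      intro y hy
      rw [BoundedContinuousFunction.norm_le hδ.le]
      intro γ
      have hcoord : ⌊y (g γ) / δ⌋ = ⌊y γ / δ⌋ := by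
        have := congrFun (hgq γ) ⟨y, hy⟩
        simpa [hq] using this
      have : |y (g γ) - y γ| ≤ δ := MAP_floor_close hδ hcoord
      exact this
    obtain ⟨y, hy, hfy⟩ : ∃ y ∈ t, f ∈ ball y δ := by
      have := htK hf
      simpa using this
    have hfy' : ‖f - y‖ ≤ δ := by
      have : dist f y < δ := mem_ball.1 hfy
      rw [dist_eq_norm] at this
      exact this.le
    have h1 : ‖p (f - y)‖ ≤ δ := by
      calc ‖p (f - y)‖ ≤ 1 * ‖f - y‖ := p.le_of_opNorm_le
            (plin.mkContinuous_norm_le zero_le_one hpnorm) _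
        _ ≤ δ := by rw [one_mul]; exact hfy'
    calc ‖p f - f‖ = ‖p (f - y) + (p y - y) + (y - f)‖ := by
          congr 1
          rw [map_sub]
          abel
      _ ≤ ‖p (f - y) + (p y - y)‖ + ‖y - f‖ := norm_add_le _ _
      _ ≤ ‖p (f - y)‖ + ‖p y - y‖ + ‖y - f‖ := by
          exact add_le_add (norm_add_le _ _) le_rfl
      _ ≤ δ + δ + δ := by
          refine add_le_add (add_le_add h1 (hnet y hy)) ?_
          rw [norm_sub_rev]; exact hfy'
      _ = ε := by rw [hδdef]; ring
end

section
/- Let V be a finite-dimensional real normed vector space and f : V → ℝ a bounded Lipschitz function. Then for every ε > 0 there exists a bounded Lipschitz function f_ε : V → ℝ which is infinitely differentiable and satisfies: (1) inf_V f ≤ f_ε(x) ≤ sup_V f for all x ∈ V, and Lip(f_ε) ≤ Lip(f); (2) |f_ε(x) − f(x)| ≤ Lip(f)·ε for every x ∈ V; (3) lip_a(f_ε)(x) ≤ Lip(f; B_ε(x)) for every x ∈ V. -/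
open Metric Set Filter ENNReal MeasureTheory
open scoped Convolution

lemma lipOn_le_of_forall_edist {X : Type*} [MetricSpace X] {f : X → ℝ} {E : Set X} {L : ℝ≥0∞}
    (h : ∀ a ∈ E, ∀ b ∈ E, edist (f a) (f b) ≤ L * edist a b) : lipOn f E ≤ L :=
  iSup₂_le fun a b => ENNReal.div_le_of_le_mul (h a a.2 b b.2)

lemma edist_le_lipOn_mul {X : Type*} [MetricSpace X] {f : X → ℝ} {E : Set X}
    {a b : X} (ha : a ∈ E) (hb : b ∈ E) :
    edist (f a) (f b) ≤ lipOn f E * edist a b := by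
  rcases eq_or_ne a b with rfl | hab
  · simp
  · have h0 : edist a b ≠ 0 := by simpa using hab
    have ht : edist a b ≠ ∞ := edist_ne_top a b
    have : edist (f a) (f b) / edist a b ≤ lipOn f E :=
      le_iSup₂ (f := fun (x : E) (y : E) => edist (f x) (f y) / edist (x : X) (y : X))
        (⟨a, ha⟩ : E) (⟨b, hb⟩ : E)
    calc edist (f a) (f b) = edist (f a) (f b) / edist a b * edist a b :=
          (ENNReal.div_mul_cancel h0 ht).symm
      _ ≤ lipOn f E * edist a b := mul_le_mul_left this _

lemma lipOn_mono {X : Type*} [MetricSpace X] {f : X → ℝ} {E F : Set X} (hEF : E ⊆ F) :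
    lipOn f E ≤ lipOn f F :=
  iSup₂_le fun a b =>
    le_iSup₂ (f := fun (x : F) (y : F) => edist (f x) (f y) / edist (x : X) (y : X))
      (⟨a, hEF a.2⟩ : F) (⟨b, hEF b.2⟩ : F)

lemma dist_le_lipOn_mul {X : Type*} [MetricSpace X] {f : X → ℝ} {E : Set X}
    (hfin : lipOn f E ≠ ∞) {a b : X} (ha : a ∈ E) (hb : b ∈ E) :
    dist (f a) (f b) ≤ (lipOn f E).toReal * dist a b := by
  have h := edist_le_lipOn_mul (f := f) ha hb
  have h2 : (edist (f a) (f b)).toReal ≤ (lipOn f E * edist a b).toReal :=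
    ENNReal.toReal_mono (ENNReal.mul_ne_top hfin (edist_ne_top a b)) h
  rwa [ENNReal.toReal_mul, ← dist_edist, ← dist_edist] at h2

lemma lipOn_le_of_forall_dist {X : Type*} [MetricSpace X] {f : X → ℝ} {E : Set X} {L : ℝ≥0∞}
    (hL : L ≠ ∞) (h : ∀ a ∈ E, ∀ b ∈ E, dist (f a) (f b) ≤ L.toReal * dist a b) :
    lipOn f E ≤ L := by
  refine lipOn_le_of_forall_edist fun a ha b hb => ?_
  rw [edist_dist, edist_dist]
  calc ENNReal.ofReal (dist (f a) (f b)) ≤ ENNReal.ofReal (L.toReal * dist a b) :=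
        ENNReal.ofReal_le_ofReal (h a ha b hb)
    _ = L * ENNReal.ofReal (dist a b) := by
        rw [ENNReal.ofReal_mul ENNReal.toReal_nonneg, ENNReal.ofReal_toReal hL]

section Core

variable {V : Type*} [NormedAddCommGroup V] [NormedSpace ℝ V] [FiniteDimensional ℝ V]
  [MeasurableSpace V] [BorelSpace V] {μ : Measure V} [μ.IsAddHaarMeasure]
  {f : V → ℝ}
variable (φ : ContDiffBump (0 : V))

lemma integrable_bump_mul (hf : Continuous f) (y : V) :
    Integrable (fun t => φ.normed μ t * f (y - t)) μ :=
  (φ.continuous_normed.mul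
      (hf.comp (continuous_const.sub continuous_id))).integrable_of_hasCompactSupport
    (φ.hasCompactSupport_normed.mul_right)

lemma core_diff_le (F G : V → ℝ) (h1 : Integrable F μ) (h2 : Integrable G μ) (D : ℝ)
    (h : ∀ t, |F t - G t| ≤ φ.normed μ t * D) :
    |(∫ t, F t ∂μ) - ∫ t, G t ∂μ| ≤ D := by
  rw [← integral_sub h1 h2]
  calc |∫ t, (F t - G t) ∂μ| ≤ ∫ t, φ.normed μ t * D ∂μ := by
        rw [← Real.norm_eq_abs]
        exact norm_integral_le_of_norm_le (φ.integrable_normed.mul_const D)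
          (Eventually.of_forall fun t => by simpa [Real.norm_eq_abs] using h t)
    _ = D := by rw [integral_mul_const, φ.integral_normed, one_mul]

lemma pointwise_bump (a b : V → ℝ) {D : ℝ}
    (h : ∀ t ∈ Metric.ball (0 : V) φ.rOut, |a t - b t| ≤ D) (t : V) :
    |φ.normed μ t * a t - φ.normed μ t * b t| ≤ φ.normed μ t * D := by
  rw [← mul_sub, abs_mul, abs_of_nonneg (φ.nonneg_normed t)]
  by_cases ht : t ∈ Function.support (φ.normed μ)
  · rw [φ.support_normed_eq] at ht
    exact mul_le_mul_of_nonneg_left (h t ht) (φ.nonneg_normed t)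
  · have h0 : φ.normed μ t = 0 := Function.notMem_support.1 ht
    simp [h0]

lemma main_aux (μ : Measure V) [μ.IsAddHaarMeasure] [μ.Regular]
    {f : V → ℝ} (hK' : ∃ K, LipschitzWith K f) (hBdd : ∃ C, ∀ x, |f x| ≤ C)
    (ε : ℝ) (hε : 0 < ε) :
    ∃ fε : V → ℝ, ContDiff ℝ (⊤ : ℕ∞) fε ∧ (∃ C, ∀ x, |fε x| ≤ C) ∧ (∃ K, LipschitzWith K fε) ∧
      (∀ x, sInf (Set.range f) ≤ fε x ∧ fε x ≤ sSup (Set.range f)) ∧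
      lipOn fε Set.univ ≤ lipOn f Set.univ ∧
      (∀ x, edist (fε x) (f x) ≤ lipOn f Set.univ * ENNReal.ofReal ε) ∧
      (∀ x, asympSlope fε x ≤ lipOn f (Metric.ball x ε)) := by
  obtain ⟨K, hK⟩ := hK'
  obtain ⟨C, hC⟩ := hBdd
  have hfc : Continuous f := hK.continuous
  set φ : ContDiffBump (0 : V) := ⟨ε / 4, ε / 2, by positivity, by linarith⟩ with hφdef
  have hrOut : φ.rOut = ε / 2 := rfl
  set fε : V → ℝ := fun y => ∫ t, φ.normed μ t * f (y - t) ∂μ with hfεdef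
  -- global Lipschitz facts
  have hKf_le : lipOn f univ ≤ (K : ℝ≥0∞) :=
    lipOn_le_of_forall_edist fun a _ b _ => hK a b
  have hKf_fin : lipOn f univ ≠ ∞ := (lt_of_le_of_lt hKf_le ENNReal.coe_lt_top).ne
  set Lr : ℝ := (lipOn f univ).toReal with hLrdef
  have hLr0 : 0 ≤ Lr := ENNReal.toReal_nonneg
  have hfdist : ∀ a b : V, |f a - f b| ≤ Lr * dist a b := fun a b => by
    simpa [Real.dist_eq] using dist_le_lipOn_mul (f := f) hKf_fin (mem_univ a) (mem_univ b)
  -- Lipschitz estimate for fε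
  have hfεlip : ∀ y y' : V, |fε y - fε y'| ≤ Lr * dist y y' := by
    intro y y'
    refine core_diff_le (μ := μ) φ _ _ (integrable_bump_mul (μ := μ) φ hfc y) (integrable_bump_mul (μ := μ) φ hfc y') _
      (pointwise_bump (μ := μ) φ _ _ fun t _ => ?_)
    calc |f (y - t) - f (y' - t)| ≤ Lr * dist (y - t) (y' - t) := hfdist _ _
      _ = Lr * dist y y' := by rw [dist_sub_right]
  have hfεLW : LipschitzWith (lipOn f univ).toNNReal fε := by
    refine LipschitzWith.of_dist_le_mul fun y y' => ?_
    have : ((lipOn f univ).toNNReal : ℝ) = Lr := rfl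
    rw [Real.dist_eq, this]
    exact hfεlip y y'
  -- smoothness
  have hsmooth : ContDiff ℝ (⊤ : ℕ∞) fε := by
    have hconv : fε = (φ.normed μ) ⋆[ContinuousLinearMap.lsmul ℝ ℝ, μ] f := by
      funext y
      rw [hfεdef, convolution_def]
      simp [ContinuousLinearMap.lsmul_apply, smul_eq_mul]
    rw [hconv]
    exact HasCompactSupport.contDiff_convolution_left (μ := μ) (ContinuousLinearMap.lsmul ℝ ℝ)
      (φ.hasCompactSupport_normed (μ := μ)) (φ.contDiff_normed (μ := μ))
      (hfc.locallyIntegrable (μ := μ))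
  -- boundedness
  have hbdd : ∀ x, |fε x| ≤ C := by
    intro x
    have h0 : |fε x - ∫ (_t : V), (0 : ℝ) ∂μ| ≤ C := by
      refine core_diff_le (μ := μ) φ _ _ (integrable_bump_mul (μ := μ) φ hfc x) (integrable_zero _ _ μ) C ?_
      intro t
      have h1 : |φ.normed μ t * f (x - t) - (0 : V → ℝ) t| = φ.normed μ t * |f (x - t)| := by
        rw [Pi.zero_apply, sub_zero, abs_mul, abs_of_nonneg (φ.nonneg_normed t)]
      rw [h1]
      exact mul_le_mul_of_nonneg_left (hC _) (φ.nonneg_normed t)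
    simpa using h0
  -- inf/sup bounds
  have hrange_ne : (range f).Nonempty := ⟨f 0, mem_range_self 0⟩
  have hbb : BddBelow (range f) := ⟨-C, fun z hz => by
    obtain ⟨w, rfl⟩ := hz; have := (abs_le.1 (hC w)).1; linarith⟩
  have hba : BddAbove (range f) := ⟨C, fun z hz => by
    obtain ⟨w, rfl⟩ := hz; exact (abs_le.1 (hC w)).2⟩
  have hinfsup : ∀ x, sInf (range f) ≤ fε x ∧ fε x ≤ sSup (range f) := by
    intro x
    constructor
    · have hmono : (∫ t, φ.normed μ t * sInf (range f) ∂μ) ≤ ∫ t, φ.normed μ t * f (x - t) ∂μ :=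
        integral_mono (φ.integrable_normed.mul_const _) (integrable_bump_mul (μ := μ) φ hfc x)
          fun t => mul_le_mul_of_nonneg_left (csInf_le hbb (mem_range_self _))
            (φ.nonneg_normed t)
      calc sInf (range f) = ∫ t, φ.normed μ t * sInf (range f) ∂μ := by
            rw [integral_mul_const, φ.integral_normed, one_mul]
        _ ≤ fε x := hmono
    · have hmono : (∫ t, φ.normed μ t * f (x - t) ∂μ) ≤ ∫ t, φ.normed μ t * sSup (range f) ∂μ :=
        integral_mono (integrable_bump_mul (μ := μ) φ hfc x) (φ.integrable_normed.mul_const _)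
          fun t => mul_le_mul_of_nonneg_left (le_csSup hba (mem_range_self _))
            (φ.nonneg_normed t)
      calc fε x ≤ ∫ t, φ.normed μ t * sSup (range f) ∂μ := hmono
        _ = sSup (range f) := by rw [integral_mul_const, φ.integral_normed, one_mul]
  -- approximation bound
  have happrox : ∀ x, edist (fε x) (f x) ≤ lipOn f univ * ENNReal.ofReal ε := by
    intro x
    have hreal : |fε x - f x| ≤ Lr * ε := by
      have hGx : (∫ t, φ.normed μ t * f x ∂μ) = f x := by
        rw [integral_mul_const, φ.integral_normed, one_mul]
      have := core_diff_le (μ := μ) φ (fun t => φ.normed μ t * f (x - t)) (fun t => φ.normed μ t * f x)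
        (integrable_bump_mul (μ := μ) φ hfc x) (φ.integrable_normed.mul_const _) (Lr * ε)
        (pointwise_bump (μ := μ) φ _ _ fun t ht => ?_)
      · rwa [hGx] at this
      · have hnt : ‖t‖ < ε / 2 := by
          rw [hrOut] at ht; simpa [dist_eq_norm] using mem_ball_iff_norm.1 ht
        calc |f (x - t) - f x| ≤ Lr * dist (x - t) x := hfdist _ _
          _ = Lr * ‖t‖ := by
            congr 1
            simp [dist_eq_norm]
          _ ≤ Lr * ε := by nlinarith
    rw [edist_dist, Real.dist_eq]
    calc ENNReal.ofReal |fε x - f x| ≤ ENNReal.ofReal (Lr * ε) := ENNReal.ofReal_le_ofReal hreal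
      _ = lipOn f univ * ENNReal.ofReal ε := by
        rw [ENNReal.ofReal_mul hLr0, ENNReal.ofReal_toReal hKf_fin]
  -- asymptotic slope bound
  have hslope : ∀ x, asympSlope fε x ≤ lipOn f (Metric.ball x ε) := by
    intro x
    have hballfin : lipOn f (Metric.ball x ε) ≠ ∞ :=
      (lt_of_le_of_lt (le_trans (lipOn_mono (subset_univ _)) hKf_le) ENNReal.coe_lt_top).ne
    have key : ∀ a ∈ Metric.ball x (ε / 2), ∀ b ∈ Metric.ball x (ε / 2),
        dist (fε a) (fε b) ≤ (lipOn f (Metric.ball x ε)).toReal * dist a b := by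
      intro y hy y' hy'
      rw [Real.dist_eq]
      refine core_diff_le (μ := μ) φ _ _ (integrable_bump_mul (μ := μ) φ hfc y) (integrable_bump_mul (μ := μ) φ hfc y') _
        (pointwise_bump (μ := μ) φ _ _ fun t ht => ?_)
      have hnt : ‖t‖ < ε / 2 := by
        rw [hrOut] at ht; simpa [dist_eq_norm] using mem_ball_iff_norm.1 ht
      have hmem : ∀ z ∈ Metric.ball x (ε / 2), z - t ∈ Metric.ball x ε := by
        intro z hz
        have h1 : dist (z - t) x ≤ dist (z - t) z + dist z x := dist_triangle _ _ _
        have h2 : dist (z - t) z = ‖t‖ := by simp [dist_eq_norm]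
        rw [mem_ball] at hz ⊢
        rw [h2] at h1
        linarith
      calc |f (y - t) - f (y' - t)|
          ≤ (lipOn f (Metric.ball x ε)).toReal * dist (y - t) (y' - t) := by
            simpa [Real.dist_eq] using
              dist_le_lipOn_mul (f := f) hballfin (hmem y hy) (hmem y' hy')
        _ = (lipOn f (Metric.ball x ε)).toReal * dist y y' := by rw [dist_sub_right]
    calc asympSlope fε x ≤ lipOn fε (Metric.ball x (ε / 2)) :=
          iInf₂_le (ε / 2) (half_pos hε)
      _ ≤ lipOn f (Metric.ball x ε) := lipOn_le_of_forall_dist hballfin key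
  refine ⟨fε, hsmooth, ⟨C, hbdd⟩, ⟨_, hfεLW⟩, hinfsup, ?_, happrox, hslope⟩
  exact le_trans
    (lipOn_le_of_forall_edist fun a _ b _ => hfεLW a b)
    (by rw [ENNReal.coe_toNNReal hKf_fin])

end Core

/-- Smooth approximation by convolution on a finite-dimensional normed space: any bounded
Lipschitz function `f` admits, for every `ε > 0`, a smooth bounded Lipschitz approximation
`fε` with `inf f ≤ fε ≤ sup f`, `Lip(fε) ≤ Lip(f)`, `|fε - f| ≤ Lip(f)·ε` and
`lip_a(fε)(x) ≤ Lip(f; B_ε(x))` everywhere. -/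
theorem smooth_approx_finiteDimensional {V : Type*} [NormedAddCommGroup V]
    [NormedSpace ℝ V] [FiniteDimensional ℝ V]
    (f : V → ℝ) (hLip : ∃ K, LipschitzWith K f) (hBdd : ∃ C, ∀ x, |f x| ≤ C)
    (ε : ℝ) (hε : 0 < ε) :
    ∃ fε : V → ℝ, ContDiff ℝ (⊤ : ℕ∞) fε ∧ (∃ C, ∀ x, |fε x| ≤ C) ∧ (∃ K, LipschitzWith K fε) ∧
      (∀ x, sInf (Set.range f) ≤ fε x ∧ fε x ≤ sSup (Set.range f)) ∧
      lipOn fε Set.univ ≤ lipOn f Set.univ ∧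
      (∀ x, edist (fε x) (f x) ≤ lipOn f Set.univ * ENNReal.ofReal ε) ∧
      (∀ x, asympSlope fε x ≤ lipOn f (Metric.ball x ε)) := by
  borelize V
  exact main_aux (Measure.addHaarMeasure (Module.Basis.ofVectorSpace ℝ V).parallelepiped)
    hLip hBdd ε hε
end

section
/- Let B be a real Banach space, μ ≥ 0 a finite Borel measure on B concentrated on a σ-compact set, and p ∈ [1, ∞). Then the algebra Cyl(B) of smooth cylindrical functions on B is dense in L^p(μ) with respect to the strong (norm) topology. -/
/-!
Reduce to a bounded continuous `h` (dense in `Lᵖ` for finite Borel measures on metric spaces).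
On each compact set `K` Stone–Weierstrass, applied to the algebra generated by continuous linear
functionals (which separate points by Hahn–Banach), gives `g ∘ T` uniformly close to `h`, with
`T : B → V` finite-dimensional and `g` smooth; a smooth cutoff equal to `1` on `T '' K` makes `g`
compactly supported, hence bounded and Lipschitz, and keeps it bounded by `sup |h| + 1`.
Exhausting the σ-compact support of `μ` by compacts gives cylindrical functions converging to `h`
`μ`-a.e. with a uniform bound, hence in `Lᵖ`.
-/

open Metric Set Filter ENNReal MeasureTheory

/-- A smooth cylindrical function on a Banach space `B`: a function of the form `g ∘ p`
where `p : B → V` is a bounded linear operator into a finite-dimensional normed space `V`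
and `g : V → ℝ` is infinitely differentiable, bounded and Lipschitz. -/
def IsCylindrical {B : Type*} [NormedAddCommGroup B] [NormedSpace ℝ B] (f : B → ℝ) : Prop :=
  ∃ (V : Type) (_ : NormedAddCommGroup V) (_ : NormedSpace ℝ V),
    FiniteDimensional ℝ V ∧ ∃ (p : B →L[ℝ] V) (g : V → ℝ),
      ContDiff ℝ (⊤ : ℕ∞) g ∧ (∃ C, ∀ v, |g v| ≤ C) ∧ (∃ K, LipschitzWith K g) ∧ f = g ∘ p

open Topology

open Manifold in
theorem exists_contDiff_hasCompactSupport_eqOn_one {V : Type*} [NormedAddCommGroup V]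
    [NormedSpace ℝ V] [FiniteDimensional ℝ V] {Q U : Set V} (hQ : IsCompact Q) (hU : IsOpen U)
    (hQU : Q ⊆ U) :
    ∃ χ : V → ℝ, ContDiff ℝ (⊤ : ℕ∞) χ ∧ HasCompactSupport χ ∧ (∀ v, χ v ∈ Icc 0 1) ∧
      EqOn χ 1 Q ∧ ∀ v ∉ U, χ v = 0 := by
  obtain ⟨R, hR⟩ := hQ.isBounded.subset_ball 0
  have hQint : Q ⊆ interior (U ∩ ball 0 R) := by
    rw [(hU.inter isOpen_ball).interior_eq]
    exact subset_inter hQU hR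
  obtain ⟨χ, hχQ, hχU, hχ01⟩ :=
    exists_contMDiffMap_one_nhds_of_subset_interior 𝓘(ℝ, V) hQ.isClosed hQint (n := ⊤)
  refine ⟨χ, χ.contMDiff.contDiff, ?_, hχ01, fun v hv => hχQ.self_of_nhdsSet v hv,
    fun v hv => hχU v fun h => hv h.1⟩
  exact HasCompactSupport.intro (isCompact_closedBall 0 R)
    fun v hv => hχU v fun h => hv (ball_subset_closedBall h.2)

theorem IsCylindrical.of_hasCompactSupport {B : Type*} {V : Type} [NormedAddCommGroup B]
    [NormedSpace ℝ B] [NormedAddCommGroup V] [NormedSpace ℝ V] [FiniteDimensional ℝ V]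
    (T : B →L[ℝ] V) {g : V → ℝ} (hg : ContDiff ℝ (⊤ : ℕ∞) g) (hgc : HasCompactSupport g) :
    IsCylindrical (g ∘ T) := by
  obtain ⟨C, hC⟩ := hgc.exists_bound_of_continuous hg.continuous
  exact ⟨V, _, _, inferInstance, T, g, hg, ⟨C, hC⟩,
    ContDiff.lipschitzWith_of_hasCompactSupport hgc hg (by simp), rfl⟩

theorem IsCylindrical.continuous {B : Type*} [NormedAddCommGroup B] [NormedSpace ℝ B]
    {f : B → ℝ} (hf : IsCylindrical f) : Continuous f := by
  obtain ⟨V, _, _, _, T, g, hg, -, -, rfl⟩ := hf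
  exact hg.continuous.comp T.continuous

def IsSmoothCylinder {B : Type*} [NormedAddCommGroup B] [NormedSpace ℝ B] (f : B → ℝ) : Prop :=
  ∃ (V : Type) (_ : NormedAddCommGroup V) (_ : NormedSpace ℝ V),
    FiniteDimensional ℝ V ∧ ∃ (T : B →L[ℝ] V) (g : V → ℝ), ContDiff ℝ (⊤ : ℕ∞) g ∧ f = g ∘ T

namespace IsSmoothCylinder

variable {B : Type*} [NormedAddCommGroup B] [NormedSpace ℝ B]

theorem of_dual (ℓ : B →L[ℝ] ℝ) : IsSmoothCylinder (ℓ : B → ℝ) :=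
  ⟨ℝ, _, _, inferInstance, ℓ, id, contDiff_id, rfl⟩

theorem const (c : ℝ) : IsSmoothCylinder (fun _ : B => c) :=
  ⟨ℝ, _, _, inferInstance, 0, fun _ => c, contDiff_const, rfl⟩

theorem comp₂ {f₁ f₂ : B → ℝ} (h₁ : IsSmoothCylinder f₁) (h₂ : IsSmoothCylinder f₂)
    {φ : ℝ × ℝ → ℝ} (hφ : ContDiff ℝ (⊤ : ℕ∞) φ) :
    IsSmoothCylinder (fun x => φ (f₁ x, f₂ x)) := by
  obtain ⟨V₁, _, _, _, T₁, g₁, hg₁, rfl⟩ := h₁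
  obtain ⟨V₂, _, _, _, T₂, g₂, hg₂, rfl⟩ := h₂
  exact ⟨V₁ × V₂, _, _, inferInstance, T₁.prod T₂, fun v => φ (g₁ v.1, g₂ v.2),
    hφ.comp ((hg₁.comp contDiff_fst).prodMk (hg₂.comp contDiff_snd)), rfl⟩

theorem add {f₁ f₂ : B → ℝ} (h₁ : IsSmoothCylinder f₁) (h₂ : IsSmoothCylinder f₂) :
    IsSmoothCylinder (f₁ + f₂) :=
  h₁.comp₂ h₂ (φ := fun v => v.1 + v.2) (contDiff_fst.add contDiff_snd)

theorem mul {f₁ f₂ : B → ℝ} (h₁ : IsSmoothCylinder f₁) (h₂ : IsSmoothCylinder f₂) :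
    IsSmoothCylinder (f₁ * f₂) :=
  h₁.comp₂ h₂ (φ := fun v => v.1 * v.2) (contDiff_fst.mul contDiff_snd)

theorem exists_isCylindrical_eqOn {f : B → ℝ} (hf : IsSmoothCylinder f) {K : Set B}
    (hK : IsCompact K) {M : ℝ} (hM : 0 ≤ M) (hfM : ∀ x ∈ K, |f x| < M) :
    ∃ G, IsCylindrical G ∧ EqOn G f K ∧ ∀ x, |G x| ≤ M := by
  obtain ⟨V, _, _, _, T, g, hg, rfl⟩ := hf
  have hU : IsOpen {v | |g v| < M} := isOpen_lt (continuous_abs.comp hg.continuous) continuous_const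
  obtain ⟨χ, hχ, hχc, hχ01, hχK, hχU⟩ :=
    exists_contDiff_hasCompactSupport_eqOn_one (hK.image T.continuous) hU (image_subset_iff.2 hfM)
  refine ⟨(χ * g) ∘ T, .of_hasCompactSupport T (hχ.mul hg) hχc.mul_right,
    fun x hx => by simp [hχK (mem_image_of_mem T hx)], fun x => ?_⟩
  by_cases hx : |g (T x)| < M
  · calc |χ (T x) * g (T x)| = |χ (T x)| * |g (T x)| := abs_mul _ _
      _ ≤ 1 * |g (T x)| := by
        gcongr
        exact abs_le.2 ⟨by linarith [(hχ01 (T x)).1], (hχ01 (T x)).2⟩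
      _ ≤ M := by linarith
  · simpa [hχU _ hx] using hM

end IsSmoothCylinder

section CylindricalApproximation

variable {B : Type*} [NormedAddCommGroup B] [NormedSpace ℝ B]

def smoothCylinderSubalgebra (K : Set B) : Subalgebra ℝ C(K, ℝ) where
  carrier := {a | ∃ f : B → ℝ, IsSmoothCylinder f ∧ ∀ x : K, a x = f x}
  mul_mem' := by
    rintro a b ⟨f₁, h₁, ha⟩ ⟨f₂, h₂, hb⟩
    exact ⟨f₁ * f₂, h₁.mul h₂, fun x => by simp [ha x, hb x]⟩
  add_mem' := by
    rintro a b ⟨f₁, h₁, ha⟩ ⟨f₂, h₂, hb⟩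
    exact ⟨f₁ + f₂, h₁.add h₂, fun x => by simp [ha x, hb x]⟩
  algebraMap_mem' r := ⟨fun _ => r, .const r, fun x => by simp⟩

theorem mem_smoothCylinderSubalgebra {K : Set B} {a : C(K, ℝ)} :
    a ∈ smoothCylinderSubalgebra K ↔ ∃ f : B → ℝ, IsSmoothCylinder f ∧ ∀ x : K, a x = f x :=
  Iff.rfl

theorem smoothCylinderSubalgebra_separatesPoints (K : Set B) :
    (smoothCylinderSubalgebra K).SeparatesPoints := by
  intro x y hxy
  obtain ⟨ℓ, hℓ⟩ := SeparatingDual.exists_separating_of_ne (R := ℝ) (Subtype.coe_injective.ne hxy)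
  exact ⟨_, ⟨⟨fun z : K => ℓ z, by fun_prop⟩,
    mem_smoothCylinderSubalgebra.2 ⟨ℓ, .of_dual ℓ, fun _ => rfl⟩, rfl⟩, hℓ⟩

theorem exists_isCylindrical_near_on_isCompact {h : B → ℝ} (hh : Continuous h) {C : ℝ}
    (hC : ∀ x, |h x| ≤ C) {K : Set B} (hK : IsCompact K) {ε : ℝ} (hε : 0 < ε) :
    ∃ G, IsCylindrical G ∧ (∀ x ∈ K, |G x - h x| < ε) ∧ ∀ x, |G x| ≤ C + ε := by
  have := isCompact_iff_compactSpace.mp hK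
  obtain ⟨⟨a, haA⟩, ha⟩ :=
    ContinuousMap.exists_mem_subalgebra_near_continuous_of_separatesPoints _
      (smoothCylinderSubalgebra_separatesPoints K) (fun x : K => h x) (by fun_prop) ε hε
  obtain ⟨f, hf, haf⟩ := mem_smoothCylinderSubalgebra.1 haA
  have hfh : ∀ x ∈ K, |f x - h x| < ε := fun x hx => by simpa [haf ⟨x, hx⟩] using ha ⟨x, hx⟩
  have hfC : ∀ x ∈ K, |f x| < C + ε := fun x hx => by
    linarith [abs_sub_abs_le_abs_sub (f x) (h x), hfh x hx, hC x]
  obtain ⟨G, hG, hGf, hGC⟩ :=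
    hf.exists_isCylindrical_eqOn hK (by linarith [abs_nonneg (h 0), hC 0]) hfC
  exact ⟨G, hG, fun x hx => hGf hx ▸ hfh x hx, hGC⟩

theorem exists_seq_isCylindrical_tendsto_on_isSigmaCompact {h : B → ℝ} (hh : Continuous h)
    {C : ℝ} (hC : ∀ x, |h x| ≤ C) {S : Set B} (hS : IsSigmaCompact S) :
    ∃ G : ℕ → B → ℝ, (∀ n, IsCylindrical (G n)) ∧ (∀ n x, |G n x| ≤ C + 1) ∧
      ∀ x ∈ S, Tendsto (G · x) atTop (𝓝 (h x)) := by
  obtain ⟨K, hK, rfl⟩ := hS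
  choose G hG hGK hGC using fun n : ℕ =>
    exists_isCylindrical_near_on_isCompact hh hC (isCompact_accumulate hK n) Nat.one_div_pos_of_nat
  have one_div_succ_le_one (n : ℕ) : 1 / ((n : ℝ) + 1) ≤ 1 := (div_le_one (by positivity)).2 (by simp)
  refine ⟨G, hG, fun n x => (hGC n x).trans (by gcongr; exact one_div_succ_le_one n), ?_⟩
  intro x hx
  obtain ⟨m, hm⟩ := mem_iUnion.1 hx
  rw [tendsto_iff_dist_tendsto_zero]
  refine squeeze_zero' (.of_forall fun n => dist_nonneg) ?_ tendsto_one_div_add_atTop_nhds_zero_nat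
  filter_upwards [eventually_ge_atTop m] with n hn
  exact (hGK n x (monotone_accumulate hn (subset_accumulate hm))).le

end CylindricalApproximation

theorem unifIntegrable_of_forall_norm_le {ι α β : Type*} [MeasurableSpace α] {μ : Measure α}
    [NormedAddCommGroup β] {p : ℝ≥0∞} (hp : 1 ≤ p) (hp' : p ≠ ∞) {f : ι → α → β}
    (hf : ∀ i, AEStronglyMeasurable (f i) μ) {C : ℝ} (hC : ∀ i x, ‖f i x‖ ≤ C) :
    UnifIntegrable f p μ := by
  refine unifIntegrable_of hp hp' hf fun _ _ => ⟨C.toNNReal + 1, fun i => ?_⟩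
  have hempty : {x | C.toNNReal + 1 ≤ ‖f i x‖₊} = ∅ := by
    refine eq_empty_iff_forall_notMem.2 fun x hx => ?_
    have := NNReal.coe_le_coe.2 hx
    push_cast at this
    linarith [Real.le_coe_toNNReal C, hC i x]
  simp [hempty]

theorem cylindrical_dense_in_Lp_general {B : Type*} [NormedAddCommGroup B] [NormedSpace ℝ B]
    [MeasurableSpace B] [BorelSpace B]
    (μ : Measure B) [IsFiniteMeasure μ]
    (hconc : ∃ S : Set B, IsSigmaCompact S ∧ μ Sᶜ = 0)
    (p : ℝ≥0∞) (hp : 1 ≤ p) (hp' : p ≠ ∞) :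
    ∀ f : B → ℝ, MemLp f p μ → ∀ ε : ℝ, 0 < ε →
      ∃ g : B → ℝ, IsCylindrical g ∧ eLpNorm (fun x => f x - g x) p μ < ENNReal.ofReal ε := by
  obtain ⟨S, hS, hSμ⟩ := hconc
  intro f hf ε hε
  have hε2 : 0 < ENNReal.ofReal (ε / 2) := ENNReal.ofReal_pos.2 (half_pos hε)
  obtain ⟨h, hfh, hh⟩ := hf.exists_boundedContinuous_eLpNorm_sub_le hp' hε2.ne'
  obtain ⟨G, hG, hGbound, hGh⟩ := exists_seq_isCylindrical_tendsto_on_isSigmaCompact h.continuous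
    (fun x => (Real.norm_eq_abs _).symm.trans_le (h.norm_coe_le_norm x)) hS
  have hGmeas (n : ℕ) : AEStronglyMeasurable (G n) μ := (hG n).continuous.aestronglyMeasurable
  have hGLp : Tendsto (fun n => eLpNorm (G n - ⇑h) p μ) atTop (𝓝 0) :=
    tendsto_Lp_finite_of_tendsto_ae hp hp' hGmeas hh
      (unifIntegrable_of_forall_norm_le hp hp' hGmeas hGbound)
      (mem_of_superset (mem_ae_iff.2 hSμ) hGh)
  obtain ⟨n, hn⟩ := (hGLp.eventually_lt_const hε2).exists
  refine ⟨G n, hG n, ?_⟩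
  calc eLpNorm (f - G n) p μ
      ≤ eLpNorm (f - ⇑h) p μ + eLpNorm (G n - ⇑h) p μ := by
        have hsplit : f - G n = (f - ⇑h) - (G n - ⇑h) := by abel
        rw [hsplit]
        exact eLpNorm_sub_le (hf.1.sub hh.1) ((hGmeas n).sub hh.1) hp
    _ < ENNReal.ofReal (ε / 2) + ENNReal.ofReal (ε / 2) :=
        ENNReal.add_lt_add_of_le_of_lt (hfh.trans_lt ofReal_lt_top).ne hfh hn
    _ = ENNReal.ofReal ε := by
        rw [← ENNReal.ofReal_add (half_pos hε).le (half_pos hε).le, add_halves]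

/-- If `μ` is a finite Borel measure on a real Banach space `B` concentrated on a σ-compact
set and `p ∈ [1, ∞)`, then the smooth cylindrical functions are dense in `L^p(μ)`. -/
theorem cylindrical_dense_in_Lp {B : Type*} [NormedAddCommGroup B] [NormedSpace ℝ B]
    [CompleteSpace B] [MeasurableSpace B] [BorelSpace B]
    (μ : Measure B) [IsFiniteMeasure μ]
    (hconc : ∃ S : Set B, IsSigmaCompact S ∧ μ Sᶜ = 0)
    (p : ℝ≥0∞) (hp : 1 ≤ p) (hp' : p ≠ ∞) :
    ∀ f : B → ℝ, MemLp f p μ → ∀ ε : ℝ, 0 < ε →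
      ∃ g : B → ℝ, IsCylindrical g ∧ eLpNorm (fun x => f x - g x) p μ < ENNReal.ofReal ε :=
  cylindrical_dense_in_Lp_general μ hconc p hp hp'
end
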